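/- arXiv:2307.07495 — 12 statements merged into one kernel-verified Lean document; each statement's English description precedes it below -/
import Mathlib

section
/- Let σ be a preference profile on voters V and candidates C, and let q ∈ Δ(C). For any candidate a in the (p^uni, q)-veto core of σ and any metric d aligned with σ, the social cost of a satisfies SC(a,d) ≤ (1 + 2/μ(σ,q)) · SC(o,d), where o is a candidate minimizing SC(·,d). Consequently, any algorithm that always outputs a candidate from the (p^uni, q)-veto core has distortion at most 1 + 2/μ(σ,q). -/
open Finset

/-- The top-ranked candidate of voter `v` under profile `σ` (rank 0 is best). -/
noncomputable def top {V C : Type*} [Fintype C] [Nonempty C]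
    (σ : V → (C ≃ Fin (Fintype.card C))) (v : V) : C :=
  (σ v).symm ⟨0, Fintype.card_pos⟩

/-- Plurality score: number of voters ranking `c` first. -/
noncomputable def plu {V C : Type*} [Fintype C] [Nonempty C]
    (σ : V → (C ≃ Fin (Fintype.card C))) (c : C) : ℕ :=
  Nat.card {v : V // top σ v = c}

/-- `a` is in the `(p,q)`-veto core of `σ`: its `(p,q)`-domination graph admits a
    fractional perfect matching. -/
def inVetoCore {V C : Type*} [Fintype V] [Fintype C]
    (σ : V → (C ≃ Fin (Fintype.card C))) (p : V → ℝ) (q : C → ℝ) (a : C) : Prop :=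
  ∃ w : V → C → ℝ,
    (∀ v c, 0 ≤ w v c) ∧
    (∀ v c, w v c ≠ 0 → σ v a ≤ σ v c) ∧
    (∀ v, ∑ c, w v c = p v) ∧
    (∀ c, ∑ v, w v c = q c)

/-- `μ(σ,q) = min_{c : plu(c) > 0} q(c)·n / plu(c)`. -/
noncomputable def mu {V C : Type*} [Fintype V] [Fintype C] [Nonempty C]
    (σ : V → (C ≃ Fin (Fintype.card C))) (q : C → ℝ) : ℝ :=
  sInf {x : ℝ | ∃ c : C, 0 < plu σ c ∧ x = q c * (Fintype.card V : ℝ) / (plu σ c : ℝ)}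

/-- Social cost of candidate `c`. -/
noncomputable def SC {V C X : Type*} [Fintype V] [MetricSpace X]
    (vloc : V → X) (cloc : C → X) (c : C) : ℝ :=
  ∑ v, dist (vloc v) (cloc c)

/-- The metric (given by locations) is aligned with the preference profile `σ`. -/
def aligned {V C X : Type*} [Fintype C] [MetricSpace X]
    (vloc : V → X) (cloc : C → X) (σ : V → (C ≃ Fin (Fintype.card C))) : Prop :=
  ∀ (v : V) (c₁ c₂ : C), σ v c₁ < σ v c₂ → dist (vloc v) (cloc c₁) ≤ dist (vloc v) (cloc c₂)

/-- The uniform voter-weight vector. -/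
noncomputable def puni (V : Type*) [Fintype V] : V → ℝ := fun _ => 1 / (Fintype.card V : ℝ)

/-- The BoostedSimVeto candidate-weight vector for confidence `δ` and prediction `chat`. -/
noncomputable def qhat {V C : Type*} [Fintype V] [Fintype C] [Nonempty C] [DecidableEq C]
    (σ : V → (C ≃ Fin (Fintype.card C))) (δ : ℝ) (chat : C) : C → ℝ :=
  fun c =>
    if c = chat then
      ((1 - δ) / (1 + δ)) * ((plu σ chat : ℝ) + 2 * δ * (Fintype.card V : ℝ) / (1 - δ))
        / (Fintype.card V : ℝ)
    else ((1 - δ) / (1 + δ)) * (plu σ c : ℝ) / (Fintype.card V : ℝ)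

set_option maxHeartbeats 1600000 in
/-- Theorem 3.2 / `thm:unip_genq`: any candidate in the
`(p^uni, q)`-veto core has social cost at most `(1 + 2/μ(σ,q))` times the optimum,
for every metric aligned with `σ`; hence any `(p^uni,q)`-algorithm has distortion
at most `1 + 2/μ(σ,q)`. -/
theorem vetoCore_distortion_uniform_p {V C X : Type*}
    [Fintype V] [Nonempty V] [Fintype C] [Nonempty C] [MetricSpace X]
    (σ : V → (C ≃ Fin (Fintype.card C)))
    (q : C → ℝ) (hq0 : ∀ c, 0 ≤ q c) (hq1 : ∑ c, q c = 1)
    (hmu : 0 < mu σ q)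
    (a : C) (ha : inVetoCore σ (puni V) q a)
    (vloc : V → X) (cloc : C → X) (hal : aligned vloc cloc σ)
    (o : C) (ho : ∀ c, SC vloc cloc o ≤ SC vloc cloc c) :
    SC vloc cloc a ≤ (1 + 2 / mu σ q) * SC vloc cloc o := by
  
  classical
  obtain ⟨w, hw0, hwdom, hwrow, hwcol⟩ := ha
  set μ := mu σ q with hμdef
  have hn0 : (0:ℝ) < (Fintype.card V : ℝ) := by exact_mod_cast Fintype.card_pos
  set n : ℝ := (Fintype.card V : ℝ) with hndef
  set dv : V → C → ℝ := fun v c => dist (vloc v) (cloc c) with hdv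
  have hdv0 : ∀ v c, 0 ≤ dv v c := fun v c => dist_nonneg
  set P : C → Finset V := fun c => univ.filter (fun v => top σ v = c) with hPdef
  have hpluP : ∀ c, (plu σ c : ℝ) = ((P c).card : ℝ) := by
    intro c
    rw [plu, Nat.card_eq_fintype_card, Fintype.card_subtype]
  have hplusum : ∑ c, ((P c).card : ℝ) = n := by
    have h : (univ : Finset V).card = ∑ c, (P c).card :=
      Finset.card_eq_sum_card_fiberwise (fun v _ => mem_univ (top σ v))
    rw [hndef]
    rw [← Finset.card_univ]
    exact_mod_cast h.symm
  have hfibsum : ∑ c, ∑ u ∈ P c, dv u o = ∑ u, dv u o := by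
    simp only [hPdef]
    exact Finset.sum_fiberwise_of_maps_to (fun v _ => mem_univ (top σ v)) _
  have hmu_le : ∀ c, 0 < plu σ c → μ * (plu σ c : ℝ) ≤ q c * n := by
    intro c hc
    have hfin : {x : ℝ | ∃ c : C, 0 < plu σ c ∧
        x = q c * (Fintype.card V : ℝ) / (plu σ c : ℝ)}.Finite := by
      apply Set.Finite.subset
        (Set.finite_range (fun c : C => q c * (Fintype.card V : ℝ) / (plu σ c : ℝ)))
      rintro x ⟨c, _, rfl⟩
      exact ⟨c, rfl⟩
    have h1 : μ ≤ q c * (Fintype.card V : ℝ) / (plu σ c : ℝ) := by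
      rw [hμdef, mu]
      exact csInf_le hfin.bddBelow ⟨c, hc, rfl⟩
    have hcpos : (0:ℝ) < (plu σ c : ℝ) := by exact_mod_cast hc
    rw [hndef]
    calc μ * (plu σ c : ℝ)
        ≤ (q c * (Fintype.card V:ℝ) / (plu σ c:ℝ)) * (plu σ c:ℝ) :=
          mul_le_mul_of_nonneg_right h1 hcpos.le
      _ = q c * (Fintype.card V:ℝ) := by field_simp
  have hq_pos : ∀ c, 0 < plu σ c → 0 < q c := by
    intro c hc
    have h1 := hmu_le c hc
    have hcpos : (0:ℝ) < (plu σ c : ℝ) := by exact_mod_cast hc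
    nlinarith
  set scale : C → ℝ := fun c =>
    if 0 < plu σ c then μ * (plu σ c : ℝ) / (q c * n) else 0 with hscaledef
  have hscale0 : ∀ c, 0 ≤ scale c := by
    intro c
    simp only [hscaledef]
    split
    · rename_i hc
      have hq := hq_pos c hc
      have hcpos : (0:ℝ) < (plu σ c : ℝ) := by exact_mod_cast hc
      apply div_nonneg (by nlinarith) (by nlinarith)
    · exact le_refl 0
  have hscale1 : ∀ c, scale c ≤ 1 := by
    intro c
    simp only [hscaledef]
    split
    · rename_i hc
      have hq := hq_pos c hc
      rw [div_le_one (by nlinarith)]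
      exact hmu_le c hc
    · exact zero_le_one
  set w2 : V → C → ℝ := fun v c => w v c * scale c with hw2def
  have hw20 : ∀ v c, 0 ≤ w2 v c := fun v c => mul_nonneg (hw0 v c) (hscale0 c)
  have hw2le : ∀ v c, w2 v c ≤ w v c := by
    intro v c
    calc w2 v c = w v c * scale c := rfl
      _ ≤ w v c * 1 := mul_le_mul_of_nonneg_left (hscale1 c) (hw0 v c)
      _ = w v c := mul_one _
  have hcol2 : ∀ c, ∑ v, w2 v c = q c * scale c := by
    intro c
    simp only [hw2def]
    rw [← Finset.sum_mul, hwcol]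
  have hqs : ∀ c, q c * scale c = μ * (plu σ c : ℝ) / n := by
    intro c
    simp only [hscaledef]
    split
    · rename_i hc
      have hq := (hq_pos c hc).ne'
      field_simp
    · rename_i hc
      have h0 : plu σ c = 0 := Nat.eq_zero_of_not_pos hc
      simp [h0]
  have hps : ∑ c, (plu σ c : ℝ) = n := by
    simp only [hpluP]
    exact hplusum
  have htot2 : ∑ c, q c * scale c = μ := by
    rw [Finset.sum_congr rfl (fun c _ => hqs c)]
    have h : ∑ c, μ * (plu σ c:ℝ)/n = μ/n * ∑ c, (plu σ c : ℝ) := by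
      rw [Finset.mul_sum]
      exact Finset.sum_congr rfl (fun c _ => by ring)
    rw [h, hps]
    field_simp
  have hrowsum : ∀ v, ∑ c, w v c = 1 / n := by
    intro v
    rw [hwrow v]
    simp [puni, hndef]
  have hrow2 : ∀ v, ∑ c, w2 v c ≤ 1/n := by
    intro v
    calc ∑ c, w2 v c ≤ ∑ c, w v c := Finset.sum_le_sum (fun c _ => hw2le v c)
      _ = 1/n := hrowsum v
  have hmono : ∀ (v : V) (c₁ c₂ : C), σ v c₁ ≤ σ v c₂ → dv v c₁ ≤ dv v c₂ := by
    intro v c₁ c₂ h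
    rcases lt_or_eq_of_le h with h | h
    · exact hal v c₁ c₂ h
    · rw [(σ v).injective h]
  have htopd : ∀ v c, dv v (top σ v) ≤ dv v c := by
    intro v c
    apply hmono
    rw [top, Equiv.apply_symm_apply]
    simp [Fin.le_def]
  have hmatch : ∀ v c, w v c ≠ 0 → dv v a ≤ dv v c := fun v c h => hmono v a c (hwdom v c h)
  set D : ℝ := dist (cloc o) (cloc a) with hDdef
  have hD0 : 0 ≤ D := dist_nonneg
  have htri : ∀ v, dv v a ≤ dv v o + D := by
    intro v
    simp only [hdv, hDdef]
    exact dist_triangle (vloc v) (cloc o) (cloc a)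
  set B : C → ℝ := fun c => 2 * (∑ u ∈ P c, dv u o) / ((P c).card : ℝ) with hBdef
  have hoc : ∀ c, 0 < plu σ c → dist (cloc o) (cloc c) ≤ B c := by
    intro c hc
    have hcard : (0:ℝ) < ((P c).card : ℝ) := by
      rw [← hpluP]; exact_mod_cast hc
    simp only [hBdef]
    rw [le_div_iff₀ hcard]
    have hstep : ∀ u ∈ P c, dist (cloc o) (cloc c) ≤ 2 * dv u o := by
      intro u hu
      have hut : top σ u = c := by
        simp only [hPdef, mem_filter] at hu
        exact hu.2
      have h1 : dist (cloc o) (cloc c) ≤ dist (cloc o) (vloc u) + dist (vloc u) (cloc c) :=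
        dist_triangle _ _ _
      have h2 : dv u c ≤ dv u o := by
        have h := htopd u o
        rwa [hut] at h
      have h3 : dist (cloc o) (vloc u) = dv u o := by
        simp only [hdv]; exact dist_comm _ _
      simp only [hdv] at h2 ⊢
      rw [h3] at h1
      simp only [hdv] at h1
      linarith
    calc dist (cloc o) (cloc c) * ((P c).card : ℝ)
        = ∑ _u ∈ P c, dist (cloc o) (cloc c) := by
          rw [Finset.sum_const, nsmul_eq_mul]; ring
      _ ≤ ∑ u ∈ P c, 2 * dv u o := Finset.sum_le_sum hstep
      _ = 2 * ∑ u ∈ P c, dv u o := by rw [Finset.mul_sum]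
  have hclose : ∀ v c, 0 < plu σ c → dv v c ≤ dv v o + B c := by
    intro v c hc
    have h1 : dv v c ≤ dv v o + dist (cloc o) (cloc c) := by
      simp only [hdv]
      exact dist_triangle _ _ _
    linarith [hoc c hc]
  have hw2top : ∀ v c, w2 v c ≠ 0 → w v c ≠ 0 ∧ 0 < plu σ c := by
    intro v c h
    constructor
    · intro h0
      exact h (by simp [hw2def, h0])
    · by_contra hcn
      exact h (by simp [hw2def, hscaledef, hcn])
  have hclaim1 : ∀ v c, w2 v c * dv v a ≤ w2 v c * (dv v o + B c) := by
    intro v c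
    by_cases h : w2 v c = 0
    · simp [h]
    · obtain ⟨hwne, hc⟩ := hw2top v c h
      have t1 := hmatch v c hwne
      have t2 := hclose v c hc
      exact mul_le_mul_of_nonneg_left (by linarith) (hw20 v c)
  have hclaim2 : ∀ v c, (w v c - w2 v c) * dv v a ≤ (w v c - w2 v c) * (dv v o + D) := by
    intro v c
    exact mul_le_mul_of_nonneg_left (htri v) (by linarith [hw2le v c])
  have hSCa : ∑ v, dv v a = n * ∑ v, ∑ c, w v c * dv v a := by
    rw [Finset.mul_sum]
    apply Finset.sum_congr rfl
    intro v _
    rw [← Finset.sum_mul, hrowsum v]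
    field_simp
  have hE1 : ∑ v, ∑ c, w v c * dv v o = (∑ v, dv v o)/n := by
    rw [Finset.sum_div]
    apply Finset.sum_congr rfl
    intro v _
    rw [← Finset.sum_mul, hrowsum v]
    ring
  have hE2 : ∑ v, ∑ c, w2 v c * B c = 2*μ*(∑ v, dv v o)/n := by
    rw [Finset.sum_comm]
    have h1 : ∀ c, ∑ v, w2 v c * B c = μ * (plu σ c:ℝ)/n * B c := by
      intro c
      rw [← Finset.sum_mul, hcol2 c, hqs c]
    rw [Finset.sum_congr rfl (fun c _ => h1 c)]
    have hcB : ∀ c, μ * (plu σ c:ℝ)/n * B c = 2*μ/n * ∑ u ∈ P c, dv u o := by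
      intro c
      by_cases hc : 0 < plu σ c
      · have hcard : ((P c).card : ℝ) ≠ 0 := by
          rw [← hpluP]
          exact_mod_cast hc.ne'
        simp only [hBdef]
        rw [hpluP]
        calc μ * (((P c).card : ℝ))/n * (2 * (∑ u ∈ P c, dv u o) / (((P c).card : ℝ)))
            = 2*μ/n * (∑ u ∈ P c, dv u o) * ((((P c).card : ℝ))/(((P c).card : ℝ))) := by
              ring
          _ = 2*μ/n * ∑ u ∈ P c, dv u o := by rw [div_self hcard, mul_one]
      · have h0 : plu σ c = 0 := Nat.eq_zero_of_not_pos hc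
        have hPe : ((P c).card : ℝ) = 0 := by
          rw [← hpluP, h0]; norm_num
        have hPempty : P c = ∅ := by
          rw [← Finset.card_eq_zero]
          exact_mod_cast hPe
        simp [h0, hPempty]
    rw [Finset.sum_congr rfl (fun c _ => hcB c), ← Finset.mul_sum, hfibsum]
    ring
  have hE3 : ∑ v, ∑ c, (w v c - w2 v c) = 1 - μ := by
    rw [Finset.sum_comm]
    have h1 : ∀ c, ∑ v, (w v c - w2 v c) = q c - q c * scale c := by
      intro c
      rw [Finset.sum_sub_distrib, hwcol c, hcol2 c]
    rw [Finset.sum_congr rfl (fun c _ => h1 c), Finset.sum_sub_distrib, hq1, htot2]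
  have hE3' : ∑ v, ∑ c, (w v c - w2 v c) * D = (1-μ)*D := by
    simp only [← Finset.sum_mul]
    rw [hE3]
  have hT : ∑ v, ∑ c, w v c * dv v a ≤
      (∑ v, dv v o)/n + 2*μ*(∑ v, dv v o)/n + (1-μ)*D := by
    calc ∑ v, ∑ c, w v c * dv v a
        ≤ ∑ v, ∑ c, (w2 v c * (dv v o + B c) + (w v c - w2 v c) * (dv v o + D)) := by
          apply Finset.sum_le_sum
          intro v _
          apply Finset.sum_le_sum
          intro c _
          have h : w v c * dv v a = w2 v c * dv v a + (w v c - w2 v c) * dv v a := by ring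
          rw [h]
          exact add_le_add (hclaim1 v c) (hclaim2 v c)
      _ = ∑ v, ∑ c, (w v c * dv v o + w2 v c * B c + (w v c - w2 v c) * D) := by
          apply Finset.sum_congr rfl
          intro v _
          apply Finset.sum_congr rfl
          intro c _
          ring
      _ = (∑ v, ∑ c, w v c * dv v o) + (∑ v, ∑ c, w2 v c * B c)
            + (∑ v, ∑ c, (w v c - w2 v c) * D) := by
          simp [Finset.sum_add_distrib]
      _ = (∑ v, dv v o)/n + 2*μ*(∑ v, dv v o)/n + (1-μ)*D := by
          rw [hE1, hE2, hE3']
  have htotw2 : ∑ v, ∑ c, w2 v c = μ := by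
    rw [Finset.sum_comm]
    rw [Finset.sum_congr rfl (fun c _ => hcol2 c), htot2]
  have hA : μ * D ≤ 2*(∑ v, dv v o)/n + 2*μ*(∑ v, dv v o)/n := by
    have h1 : ∑ v, ∑ c, w2 v c * D = μ * D := by
      simp only [← Finset.sum_mul]
      rw [htotw2]
    have hedge : ∀ v c, w2 v c * D ≤ w2 v c * (2 * dv v o + B c) := by
      intro v c
      by_cases h : w2 v c = 0
      · simp [h]
      · obtain ⟨hwne, hc⟩ := hw2top v c h
        have t1 : D ≤ dv v o + dv v a := by
          simp only [hDdef, hdv]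
          calc dist (cloc o) (cloc a)
              ≤ dist (cloc o) (vloc v) + dist (vloc v) (cloc a) := dist_triangle _ _ _
            _ = dist (vloc v) (cloc o) + dist (vloc v) (cloc a) := by
                rw [dist_comm (cloc o)]
        have t2 := hmatch v c hwne
        have t3 := hclose v c hc
        exact mul_le_mul_of_nonneg_left (by linarith) (hw20 v c)
    have hb1 : ∑ v, ∑ c, w2 v c * (2*dv v o) ≤ 2*(∑ v, dv v o)/n := by
      calc ∑ v, ∑ c, w2 v c * (2*dv v o)
          = ∑ v, (∑ c, w2 v c) * (2*dv v o) := by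
            simp only [← Finset.sum_mul]
        _ ≤ ∑ v, (1/n) * (2*dv v o) := by
            apply Finset.sum_le_sum
            intro v _
            apply mul_le_mul_of_nonneg_right (hrow2 v)
            linarith [hdv0 v o]
        _ = 2*(∑ v, dv v o)/n := by
            simp only [← Finset.mul_sum]
            ring
    calc μ * D = ∑ v, ∑ c, w2 v c * D := h1.symm
      _ ≤ ∑ v, ∑ c, w2 v c * (2*dv v o + B c) :=
          Finset.sum_le_sum (fun v _ => Finset.sum_le_sum (fun c _ => hedge v c))
      _ = (∑ v, ∑ c, w2 v c * (2*dv v o)) + ∑ v, ∑ c, w2 v c * B c := by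
          rw [← Finset.sum_add_distrib]
          apply Finset.sum_congr rfl
          intro v _
          rw [← Finset.sum_add_distrib]
          apply Finset.sum_congr rfl
          intro c _
          ring
      _ ≤ 2*(∑ v, dv v o)/n + 2*μ*(∑ v, dv v o)/n := by
          rw [hE2]
          linarith [hb1]
  have hS0 : 0 ≤ ∑ v, dv v o := Finset.sum_nonneg (fun v _ => hdv0 v o)
  have hμ1 : μ ≤ 1 := by
    calc μ = ∑ c, q c * scale c := htot2.symm
      _ ≤ ∑ c, q c := Finset.sum_le_sum (fun c _ => by
          nlinarith [hscale1 c, hq0 c, hscale0 c])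
      _ = 1 := hq1
  have hmain : ∑ v, dv v a ≤ (∑ v, dv v o) + 2*μ*(∑ v, dv v o) + n*((1-μ)*D) := by
    rw [hSCa]
    calc n * ∑ v, ∑ c, w v c * dv v a
        ≤ n * ((∑ v, dv v o)/n + 2*μ*(∑ v, dv v o)/n + (1-μ)*D) :=
          mul_le_mul_of_nonneg_left hT hn0.le
      _ = (∑ v, dv v o) + 2*μ*(∑ v, dv v o) + n*((1-μ)*D) := by
          field_simp
  have hA' : μ * (n * D) ≤ 2*(∑ v, dv v o) + 2*μ*(∑ v, dv v o) := by
    calc μ * (n*D) = n * (μ * D) := by ring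
      _ ≤ n * (2*(∑ v, dv v o)/n + 2*μ*(∑ v, dv v o)/n) :=
          mul_le_mul_of_nonneg_left hA hn0.le
      _ = 2*(∑ v, dv v o) + 2*μ*(∑ v, dv v o) := by
          field_simp
  have hgoal : ∑ v, dv v a ≤ (1 + 2/μ) * (∑ v, dv v o) := by
    rw [show (1 + 2/μ) * (∑ v, dv v o) = (μ * (∑ v, dv v o) + 2*(∑ v, dv v o))/μ by
      field_simp]
    rw [le_div_iff₀ hmu]
    nlinarith [mul_le_mul_of_nonneg_left hmain hmu.le,
      mul_le_mul_of_nonneg_left hA' (by linarith : (0:ℝ) ≤ 1 - μ), hD0, hS0, hn0.le]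
  simpa [SC, hdv] using hgoal
end

section
/- Let σ be a preference profile, q ∈ Δ(C), μ = μ(σ,q), and let a be a candidate whose (p^uni, q)-domination graph G^σ_{p^uni,q}(a) admits a fractional perfect matching. Then the voter domination graph VDG(a) also admits a fractional perfect matching: there exists a weight function w' : E'_a → ℝ_{≥0} such that Σ_{v' ∈ V∪{b} : (v,v')∈E'_a} w'(v,v') = 1/n for each v ∈ V, Σ_{v : (v,v')∈E'_a} w'(v,v') = μ/n for each v' ∈ V, and Σ_{v : (v,b)∈E'_a} w'(v,b) = 1 − μ. -/
open Finset

/-- Lemma 3.5 / `obs:matchingtomatchinganyq`: if the `(p^uni, q)`-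
domination graph of candidate `a` admits a fractional perfect matching, then so does the
voter domination graph `VDG(a)` (right-hand vertices modelled as `Option V`, with `none`
playing the role of the extra vertex `b`): there is a nonnegative weight function `w'`
supported on the edges of `VDG(a)` whose row sums are `1/n`, whose column sum at each
`v' ∈ V` is `μ/n`, and whose column sum at `b` is `1 - μ`, where `μ = μ(σ,q)`. -/
theorem vdg_fractional_perfect_matching {V C : Type*}
    [Fintype V] [Nonempty V] [Fintype C] [Nonempty C]
    (σ : V → (C ≃ Fin (Fintype.card C)))
    (q : C → ℝ) (hq0 : ∀ c, 0 ≤ q c) (hq1 : ∑ c, q c = 1)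
    (a : C) (ha : inVetoCore σ (puni V) q a) :
    ∃ w' : V → Option V → ℝ,
      (∀ v x, 0 ≤ w' v x) ∧
      (∀ v v' : V, w' v (some v') ≠ 0 → σ v a ≤ σ v (top σ v')) ∧
      (∀ v : V, w' v none ≠ 0 →
        ∃ c : C, σ v a ≤ σ v c ∧ q c > mu σ q * (plu σ c : ℝ) / (Fintype.card V : ℝ)) ∧
      (∀ v : V, ∑ x : Option V, w' v x = 1 / (Fintype.card V : ℝ)) ∧
      (∀ v' : V, ∑ v : V, w' v (some v') = mu σ q / (Fintype.card V : ℝ)) ∧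
      (∑ v : V, w' v none = 1 - mu σ q) := by
  
  classical
  obtain ⟨w, hw0, hwe, hrow, hcol⟩ := ha
  set n : ℝ := (Fintype.card V : ℝ) with hn
  have hnpos : (0:ℝ) < n := by
    rw [hn]; exact_mod_cast Fintype.card_pos (α := V)
  set μ := mu σ q with hμdef
  set S : Set ℝ := {x : ℝ | ∃ c : C, 0 < plu σ c ∧ x = q c * (Fintype.card V : ℝ) / (plu σ c : ℝ)} with hS
  have hμS : μ = sInf S := rfl
  have hplupos : ∀ v : V, 0 < plu σ (top σ v) := by
    intro v
    have : Nonempty {v' : V // top σ v' = top σ v} := ⟨⟨v, rfl⟩⟩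
    exact Nat.card_pos
  have hSne : S.Nonempty := by
    obtain ⟨v⟩ := (inferInstance : Nonempty V)
    exact ⟨_, top σ v, hplupos v, rfl⟩
  have hbdd : BddBelow S := by
    refine ⟨0, fun x hx => ?_⟩
    obtain ⟨c, hc, rfl⟩ := hx
    exact div_nonneg (mul_nonneg (hq0 c) (by positivity)) (by positivity)
  have hμ0 : 0 ≤ μ := by
    rw [hμdef, mu]
    refine le_csInf hSne fun x hx => ?_
    obtain ⟨c, hc, rfl⟩ := hx
    exact div_nonneg (mul_nonneg (hq0 c) (by positivity)) (by positivity)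
  have hμle : ∀ c : C, 0 < plu σ c → μ ≤ q c * n / (plu σ c : ℝ) := by
    intro c hc
    exact csInf_le hbdd ⟨c, hc, rfl⟩
  have hkey : ∀ c : C, μ * (plu σ c : ℝ) / n ≤ q c := by
    intro c
    rcases Nat.eq_zero_or_pos (plu σ c) with h0 | hpos
    · rw [h0]; simpa using hq0 c
    · have hp : (0:ℝ) < (plu σ c : ℝ) := by exact_mod_cast hpos
      have := hμle c hpos
      rw [div_le_iff₀ hnpos, le_div_iff₀ hp] at *
      nlinarith [hμle c hpos, hp, hnpos]
  have hwq0 : ∀ c : C, q c = 0 → ∀ v, w v c = 0 := by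
    intro c hc v
    have hsum : ∑ v, w v c = 0 := by rw [hcol c, hc]
    have := Finset.sum_eq_zero_iff_of_nonneg (fun v _ => hw0 v c) |>.1 hsum
    exact this v (Finset.mem_univ v)
  -- the weight function
  set W : V → Option V → ℝ := fun v x =>
    match x with
    | some v' => w v (top σ v') * (μ / n) / q (top σ v')
    | none => ∑ c, w v c * (1 - μ * (plu σ c : ℝ) / (n * q c)) with hW
  have hterm_nonneg : ∀ c : C, 0 ≤ 1 - μ * (plu σ c : ℝ) / (n * q c) := by
    intro c
    rcases eq_or_lt_of_le (hq0 c) with h0 | hpos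
    · rw [← h0, mul_zero, div_zero]; norm_num
    · have hd : 0 < n * q c := by positivity
      have : μ * (plu σ c : ℝ) / (n * q c) ≤ 1 := by
        rw [div_le_one hd]
        have := hkey c
        rw [div_le_iff₀ hnpos] at this
        nlinarith
      linarith
  -- plurality as a filter card
  have hplu_card : ∀ c : C, plu σ c = (Finset.univ.filter fun v : V => top σ v = c).card := by
    intro c
    rw [plu, Nat.card_eq_fintype_card, Fintype.card_subtype]
  -- fiberwise summation
  have hfiber : ∀ F : C → ℝ, ∑ v' : V, F (top σ v') = ∑ c : C, (plu σ c : ℝ) * F c := by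
    intro F
    rw [← Finset.sum_fiberwise' Finset.univ (top σ) F]
    refine Finset.sum_congr rfl fun c _ => ?_
    rw [Finset.sum_const, hplu_card c, nsmul_eq_mul]
  -- column sums at some v'
  have hcolsum : ∀ v' : V, ∑ v : V, W v (some v') = μ / n := by
    intro v'
    show ∑ v : V, w v (top σ v') * (μ / n) / q (top σ v') = μ / n
    set c := top σ v' with hc
    rw [← Finset.sum_div, ← Finset.sum_mul, hcol c]
    rcases eq_or_lt_of_le (hq0 c) with h0 | hpos
    · have hμ0' : μ = 0 := by
        have h1 := hμle c (hplupos v')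
        have hp : (0:ℝ) < (plu σ c : ℝ) := by exact_mod_cast hplupos v'
        have : q c * n / (plu σ c : ℝ) = 0 := by rw [← h0, zero_mul, zero_div]
        linarith [this ▸ h1]
      rw [← h0, zero_mul, zero_div, hμ0', zero_div]
    · field_simp
  -- row sums
  have hrowsum : ∀ v : V, ∑ x : Option V, W v x = 1 / n := by
    intro v
    rw [Fintype.sum_option]
    show (∑ c, w v c * (1 - μ * (plu σ c : ℝ) / (n * q c)))
        + ∑ v' : V, w v (top σ v') * (μ / n) / q (top σ v') = 1 / n
    rw [hfiber (fun c => w v c * (μ / n) / q c), ← Finset.sum_add_distrib]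
    have : ∀ c : C, w v c * (1 - μ * (plu σ c : ℝ) / (n * q c))
        + (plu σ c : ℝ) * (w v c * (μ / n) / q c) = w v c := by
      intro c; ring
    rw [Finset.sum_congr rfl fun c _ => this c, hrow v, puni]
  refine ⟨W, ?_, ?_, ?_, hrowsum, hcolsum, ?_⟩
  · rintro v (_ | v')
    · exact Finset.sum_nonneg fun c _ => mul_nonneg (hw0 v c) (hterm_nonneg c)
    · show 0 ≤ w v (top σ v') * (μ / n) / q (top σ v')
      exact div_nonneg (mul_nonneg (hw0 _ _) (div_nonneg hμ0 hnpos.le)) (hq0 _)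
  · intro v v' hne
    refine hwe v (top σ v') fun h => hne ?_
    show w v (top σ v') * (μ / n) / q (top σ v') = 0
    rw [h, zero_mul, zero_div]
  · intro v hne
    have : ∃ c ∈ Finset.univ, w v c * (1 - μ * (plu σ c : ℝ) / (n * q c)) ≠ 0 := by
      by_contra h
      push_neg at h
      exact hne (Finset.sum_eq_zero h)
    obtain ⟨c, -, hc⟩ := this
    have hw : w v c ≠ 0 := left_ne_zero_of_mul hc
    have ht : 1 - μ * (plu σ c : ℝ) / (n * q c) ≠ 0 := right_ne_zero_of_mul hc
    refine ⟨c, hwe v c hw, ?_⟩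
    have hqpos : 0 < q c := by
      rcases eq_or_lt_of_le (hq0 c) with h0 | hpos
      · exact absurd (hwq0 c h0.symm v) hw
      · exact hpos
    have hd : 0 < n * q c := by positivity
    have hle : μ * (plu σ c : ℝ) / (n * q c) ≤ 1 := by linarith [hterm_nonneg c]
    have hlt : μ * (plu σ c : ℝ) / (n * q c) < 1 :=
      lt_of_le_of_ne hle fun h => ht (by rw [h]; ring)
    rw [div_lt_one hd] at hlt
    rw [gt_iff_lt, div_lt_iff₀ hnpos]
    nlinarith
  · -- none column
    have : ∀ v : V, W v none = 1 / n - ∑ v' : V, W v (some v') := by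
      intro v
      have := hrowsum v
      rw [Fintype.sum_option] at this
      linarith
    rw [Finset.sum_congr rfl fun v _ => this v, Finset.sum_sub_distrib,
      Finset.sum_comm, Finset.sum_congr rfl fun v' _ => hcolsum v',
      Finset.sum_const, Finset.sum_const, Finset.card_univ, nsmul_eq_mul, nsmul_eq_mul]
    rw [← hn]
    field_simp
end

section
/- Let σ be a preference profile, d a metric aligned with σ, a a candidate, and v, v' voters such that a ≽_v top(v') (i.e., voter v weakly prefers a over the top-ranked candidate of voter v'). Then, where o is a candidate minimizing the social cost, d(v,o) + d(v',o) ≥ d(o,a)/2. -/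
open Finset

/-- Weak preference implies smaller distance, for aligned metrics. -/
lemma aligned_le {V C X : Type*} [Fintype C] [MetricSpace X]
    {vloc : V → X} {cloc : C → X} {σ : V → (C ≃ Fin (Fintype.card C))}
    (hal : aligned vloc cloc σ) (v : V) {c₁ c₂ : C} (h : σ v c₁ ≤ σ v c₂) :
    dist (vloc v) (cloc c₁) ≤ dist (vloc v) (cloc c₂) := by
  rcases lt_or_eq_of_le h with h | h
  · exact hal v c₁ c₂ h
  · rw [(σ v).injective h]

/-- Lemma 3.8 / `lem:keylemmav2anyq`: if voter `v` weakly prefers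
candidate `a` over the top choice of voter `v'`, then for any aligned metric,
`d(v,o) + d(v',o) ≥ d(o,a)/2`, where `o` is an optimal candidate. -/
theorem optimal_cost_pair_lower_bound {V C X : Type*}
    [Fintype V] [Fintype C] [Nonempty C] [MetricSpace X]
    (σ : V → (C ≃ Fin (Fintype.card C)))
    (vloc : V → X) (cloc : C → X) (hal : aligned vloc cloc σ)
    (o : C) (ho : ∀ c, SC vloc cloc o ≤ SC vloc cloc c)
    (a : C) (v v' : V) (hpref : σ v a ≤ σ v (top σ v')) :
    dist (vloc v) (cloc o) + dist (vloc v') (cloc o) ≥ dist (cloc o) (cloc a) / 2 := by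
  have h1 : dist (vloc v) (cloc a) ≤ dist (vloc v) (cloc (top σ v')) :=
    aligned_le hal v hpref
  have h2 : dist (vloc v') (cloc (top σ v')) ≤ dist (vloc v') (cloc o) := by
    apply aligned_le hal v'
    show σ v' ((σ v').symm ⟨0, Fintype.card_pos⟩) ≤ _
    simp [Fin.le_def]
  have h3 : dist (cloc o) (cloc a) ≤
      dist (cloc o) (vloc v) + dist (vloc v) (cloc (top σ v')) := by
    calc dist (cloc o) (cloc a) ≤ dist (cloc o) (vloc v) + dist (vloc v) (cloc a) :=
          dist_triangle _ _ _
      _ ≤ _ := by linarith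
  have h4 : dist (vloc v) (cloc (top σ v')) ≤
      dist (vloc v) (cloc o) + dist (cloc o) (vloc v') + dist (vloc v') (cloc (top σ v')) := by
    calc dist (vloc v) (cloc (top σ v')) ≤
        dist (vloc v) (vloc v') + dist (vloc v') (cloc (top σ v')) := dist_triangle _ _ _
      _ ≤ _ := by
        have := dist_triangle (vloc v) (cloc o) (vloc v')
        linarith
  have e1 : dist (cloc o) (vloc v) = dist (vloc v) (cloc o) := dist_comm _ _
  have e2 : dist (cloc o) (vloc v') = dist (vloc v') (cloc o) := dist_comm _ _
  linarith
end

section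
/- Let σ be a preference profile, q ∈ Δ(C), μ = μ(σ,q), and let a be a candidate in the (p^uni, q)-veto core of σ. Then for any metric d aligned with σ, where o is a candidate minimizing the social cost, SC(o,d) ≥ (μ/(1+μ)) · n · d(o,a)/2. -/
open Finset

/-- Lemma 3.9 / `lem:opt_bound_matchinganyq`: for any candidate `a`
in the `(p^uni, q)`-veto core of `σ` and any aligned metric,
`SC(o) ≥ (μ/(1+μ)) · n · d(o,a)/2`, where `μ = μ(σ,q)` and `o` is optimal. -/
theorem optimal_socialCost_lower_bound {V C X : Type*}
    [Fintype V] [Nonempty V] [Fintype C] [Nonempty C] [MetricSpace X]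
    (σ : V → (C ≃ Fin (Fintype.card C)))
    (q : C → ℝ) (hq0 : ∀ c, 0 ≤ q c) (hq1 : ∑ c, q c = 1)
    (a : C) (ha : inVetoCore σ (puni V) q a)
    (vloc : V → X) (cloc : C → X) (hal : aligned vloc cloc σ)
    (o : C) (ho : ∀ c, SC vloc cloc o ≤ SC vloc cloc c) :
    SC vloc cloc o ≥
      (mu σ q / (1 + mu σ q)) * (Fintype.card V : ℝ) * (dist (cloc o) (cloc a) / 2) := by
  classical
  obtain ⟨w, hw0, hwpref, hwrow, hwcol⟩ := ha
  have hnpos : (0:ℝ) < (Fintype.card V : ℝ) := by exact_mod_cast Fintype.card_pos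
  set n : ℝ := (Fintype.card V : ℝ) with hn
  set r : ℝ := dist (cloc o) (cloc a) / 2 with hrdef
  have hr0 : 0 ≤ r := by positivity
  -- distance consequence of veto-core matching
  have hda : ∀ v c, w v c ≠ 0 → dist (vloc v) (cloc a) ≤ dist (vloc v) (cloc c) := by
    intro v c hvc
    rcases lt_or_eq_of_le (hwpref v c hvc) with h | h
    · exact hal v a c h
    · rw [(σ v).injective h]
  -- top is nearest
  have htop : ∀ (v : V) (c : C),
      dist (vloc v) (cloc (top σ v)) ≤ dist (vloc v) (cloc c) := by
    intro v c
    rcases eq_or_ne (top σ v) c with h | h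
    · rw [h]
    · apply hal
      have h0 : σ v (top σ v) = ⟨0, Fintype.card_pos⟩ := (σ v).apply_symm_apply _
      rw [h0, Fin.lt_def]
      have : (σ v c).val ≠ 0 := by
        intro hc
        apply h
        have : σ v c = ⟨0, Fintype.card_pos⟩ := Fin.ext hc
        have := congrArg (σ v).symm this
        rw [Equiv.symm_apply_apply] at this
        rw [this]; rfl
      exact Nat.pos_of_ne_zero this
  -- plurality as a filter card
  have hplu : ∀ c : C, plu σ c = (univ.filter (fun v => top σ v = c)).card := by
    intro c
    rw [plu, Nat.card_eq_fintype_card, Fintype.card_subtype]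
  -- facts about mu
  have hMbdd : BddBelow {x : ℝ | ∃ c : C, 0 < plu σ c ∧
      x = q c * (Fintype.card V : ℝ) / (plu σ c : ℝ)} := by
    refine ⟨0, ?_⟩
    rintro x ⟨c, hc, rfl⟩
    have := hq0 c
    positivity
  have hMne : Set.Nonempty {x : ℝ | ∃ c : C, 0 < plu σ c ∧
      x = q c * (Fintype.card V : ℝ) / (plu σ c : ℝ)} := by
    obtain ⟨v₀⟩ := (inferInstance : Nonempty V)
    refine ⟨_, top σ v₀, ?_, rfl⟩
    rw [plu]
    have : Nonempty {v : V // top σ v = top σ v₀} := ⟨⟨v₀, rfl⟩⟩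
    exact Nat.card_pos
  have hmu0 : 0 ≤ mu σ q := by
    rw [mu]
    apply le_csInf hMne
    rintro x ⟨c, hc, rfl⟩
    have := hq0 c
    positivity
  have hmu_le : ∀ c : C, 0 < plu σ c → mu σ q * (plu σ c : ℝ) ≤ q c * n := by
    intro c hc
    have h1 : mu σ q ≤ q c * (Fintype.card V : ℝ) / (plu σ c : ℝ) :=
      csInf_le hMbdd ⟨c, hc, rfl⟩
    have hpc : (0:ℝ) < (plu σ c : ℝ) := by exact_mod_cast hc
    calc mu σ q * (plu σ c : ℝ)
        ≤ (q c * (Fintype.card V : ℝ) / (plu σ c : ℝ)) * (plu σ c : ℝ) :=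
          mul_le_mul_of_nonneg_right h1 (le_of_lt hpc)
      _ = q c * n := by rw [hn]; field_simp
  -- the set of close voters and their tops
  set S : Finset V := univ.filter (fun v => dist (vloc v) (cloc o) < r) with hS
  set T : Finset C := S.image (top σ) with hT
  set g : C → ℝ := fun c => r - dist (cloc o) (cloc c) / 2 with hg
  -- key pointwise bound
  have stepB : ∀ v c, w v c * g c ≤ w v c * dist (vloc v) (cloc o) := by
    intro v c
    rcases eq_or_ne (w v c) 0 with h | h
    · simp [h]
    · apply mul_le_mul_of_nonneg_left _ (hw0 v c)
      have h1 := hda v c h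
      have h2 := dist_triangle (cloc o) (vloc v) (cloc a)
      have h3 := dist_triangle (vloc v) (cloc o) (cloc c)
      rw [dist_comm (cloc o) (vloc v)] at h2
      rw [hg]; simp only []
      rw [hrdef]
      linarith
  -- for c in T, g c is at least r - d(v,o) for fiber voters, and nonneg
  have hgT : ∀ v ∈ S, dist (cloc o) (cloc (top σ v)) / 2 ≤ dist (vloc v) (cloc o) := by
    intro v _
    have h1 := dist_triangle (cloc o) (vloc v) (cloc (top σ v))
    rw [dist_comm (cloc o) (vloc v)] at h1
    have h2 := htop v o
    rw [dist_comm (vloc v) (cloc o)] at h2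
    nlinarith [htop v o, dist_comm (vloc v) (cloc o)]
  -- Chain 1 : μ * ∑_{v∈S} (r - d(v,o)) ≤ SC(o)
  have fiber : ∑ c ∈ T, ∑ v ∈ S.filter (fun v => top σ v = c),
      (r - dist (vloc v) (cloc o)) = ∑ v ∈ S, (r - dist (vloc v) (cloc o)) :=
    Finset.sum_fiberwise_of_maps_to (fun v hv => Finset.mem_image_of_mem _ hv) _
  have chain1 : mu σ q * ∑ v ∈ S, (r - dist (vloc v) (cloc o)) ≤ SC vloc cloc o := by
    -- step (i): per-fiber bound
    have fib_le : ∀ c ∈ T, ∑ v ∈ S.filter (fun v => top σ v = c),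
        (r - dist (vloc v) (cloc o)) ≤ (plu σ c : ℝ) * g c := by
      intro c hc
      obtain ⟨v₀, hv₀S, hv₀⟩ := Finset.mem_image.mp hc
      have hgc0 : 0 ≤ g c := by
        have := hgT v₀ hv₀S
        rw [hv₀] at this
        have hvS : dist (vloc v₀) (cloc o) < r := (Finset.mem_filter.mp hv₀S).2
        rw [hg]; simp only []; linarith
      have card_le : ((S.filter (fun v => top σ v = c)).card : ℝ) ≤ (plu σ c : ℝ) := by
        have : (S.filter (fun v => top σ v = c)).card
            ≤ (univ.filter (fun v => top σ v = c)).card := by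
          apply Finset.card_le_card
          intro v hv
          rw [Finset.mem_filter] at hv ⊢
          exact ⟨Finset.mem_univ v, hv.2⟩
        rw [hplu c]
        exact_mod_cast this
      calc ∑ v ∈ S.filter (fun v => top σ v = c), (r - dist (vloc v) (cloc o))
          ≤ ∑ v ∈ S.filter (fun v => top σ v = c), g c := by
            apply Finset.sum_le_sum
            intro v hv
            rw [Finset.mem_filter] at hv
            have := hgT v hv.1
            rw [hv.2] at this
            rw [hg]; simp only []; linarith
        _ = ((S.filter (fun v => top σ v = c)).card : ℝ) * g c := by
            rw [Finset.sum_const, nsmul_eq_mul]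
        _ ≤ (plu σ c : ℝ) * g c := mul_le_mul_of_nonneg_right card_le hgc0
    -- step (ii): plu to q via mu
    have qg : ∀ c ∈ T, mu σ q / n * ((plu σ c : ℝ) * g c) ≤ q c * g c := by
      intro c hc
      obtain ⟨v₀, hv₀S, hv₀⟩ := Finset.mem_image.mp hc
      have hplupos : 0 < plu σ c := by
        rw [hplu c]
        apply Finset.card_pos.mpr
        exact ⟨v₀, Finset.mem_filter.mpr ⟨Finset.mem_univ v₀, hv₀⟩⟩
      have hgc0 : 0 ≤ g c := by
        have := hgT v₀ hv₀S
        rw [hv₀] at this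
        have hvS : dist (vloc v₀) (cloc o) < r := (Finset.mem_filter.mp hv₀S).2
        rw [hg]; simp only []; linarith
      have := hmu_le c hplupos
      have hqn : mu σ q * (plu σ c : ℝ) / n ≤ q c := by
        rw [div_le_iff₀ hnpos]
        linarith
      calc mu σ q / n * ((plu σ c : ℝ) * g c) = (mu σ q * (plu σ c : ℝ) / n) * g c := by ring
        _ ≤ q c * g c := mul_le_mul_of_nonneg_right hqn hgc0
    -- step (iii): q c * g c ≤ ∑_v w v c * d(v,o)
    have qw : ∀ c : C, q c * g c ≤ ∑ v, w v c * dist (vloc v) (cloc o) := by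
      intro c
      calc q c * g c = (∑ v, w v c) * g c := by rw [hwcol c]
        _ = ∑ v, w v c * g c := by rw [Finset.sum_mul]
        _ ≤ ∑ v, w v c * dist (vloc v) (cloc o) := Finset.sum_le_sum fun v _ => stepB v c
    -- step (iv): n * ∑_{c∈T} ∑_v w v c * d(v,o) ≤ SC(o)
    have nw : n * ∑ c ∈ T, ∑ v, w v c * dist (vloc v) (cloc o) ≤ SC vloc cloc o := by
      rw [Finset.sum_comm, Finset.mul_sum, SC]
      apply Finset.sum_le_sum
      intro v _
      have hsle : ∑ c ∈ T, w v c ≤ 1 / n := by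
        have h1 : ∑ c ∈ T, w v c ≤ ∑ c, w v c :=
          Finset.sum_le_sum_of_subset_of_nonneg (Finset.subset_univ T)
            (fun c _ _ => hw0 v c)
        rw [hwrow v] at h1
        exact h1
      have hd0 : 0 ≤ dist (vloc v) (cloc o) := dist_nonneg
      calc n * ∑ c ∈ T, w v c * dist (vloc v) (cloc o)
          = (∑ c ∈ T, w v c) * (n * dist (vloc v) (cloc o)) := by
            rw [← Finset.sum_mul]; ring
        _ ≤ (1/n) * (n * dist (vloc v) (cloc o)) := by
            apply mul_le_mul_of_nonneg_right hsle
            positivity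
        _ = dist (vloc v) (cloc o) := by field_simp
    -- combine
    calc mu σ q * ∑ v ∈ S, (r - dist (vloc v) (cloc o))
        = n * ∑ c ∈ T, mu σ q / n * (∑ v ∈ S.filter (fun v => top σ v = c),
            (r - dist (vloc v) (cloc o))) := by
          rw [← fiber, Finset.mul_sum, Finset.mul_sum]
          refine Finset.sum_congr rfl fun c _ => ?_
          field_simp
      _ ≤ n * ∑ c ∈ T, mu σ q / n * ((plu σ c : ℝ) * g c) := by
          apply mul_le_mul_of_nonneg_left _ (le_of_lt hnpos)
          apply Finset.sum_le_sum
          intro c hc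
          exact mul_le_mul_of_nonneg_left (fib_le c hc) (by positivity)
      _ ≤ n * ∑ c ∈ T, q c * g c := by
          apply mul_le_mul_of_nonneg_left _ (le_of_lt hnpos)
          exact Finset.sum_le_sum qg
      _ ≤ n * ∑ c ∈ T, ∑ v, w v c * dist (vloc v) (cloc o) := by
          apply mul_le_mul_of_nonneg_left _ (le_of_lt hnpos)
          exact Finset.sum_le_sum fun c _ => qw c
      _ ≤ SC vloc cloc o := nw
  -- Chain 2 : (n - |S|) * r + sum_{v in S} d(v,o) <= SC(o)
  have chain2 : (n - (S.card : ℝ)) * r + ∑ v ∈ S, dist (vloc v) (cloc o)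
      ≤ SC vloc cloc o := by
    have hsplit : SC vloc cloc o = ∑ v ∈ S, dist (vloc v) (cloc o)
        + ∑ v ∈ univ.filter (fun v => ¬ dist (vloc v) (cloc o) < r),
            dist (vloc v) (cloc o) := by
      rw [SC, hS]
      exact (Finset.sum_filter_add_sum_filter_not univ _ _).symm
    have hcn : (S.card : ℝ)
        + ((univ.filter fun v => ¬ dist (vloc v) (cloc o) < r).card : ℝ) = n := by
      have h := Finset.card_filter_add_card_filter_not
        (s := (univ : Finset V)) (p := fun v => dist (vloc v) (cloc o) < r)
      rw [Finset.card_univ] at h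
      rw [hS, hn]
      exact_mod_cast h
    have hlow : (n - (S.card : ℝ)) * r
        ≤ ∑ v ∈ univ.filter (fun v => ¬ dist (vloc v) (cloc o) < r),
            dist (vloc v) (cloc o) := by
      have h1 : ∀ v ∈ univ.filter (fun v => ¬ dist (vloc v) (cloc o) < r),
          r ≤ dist (vloc v) (cloc o) := by
        intro v hv
        exact le_of_not_gt (Finset.mem_filter.mp hv).2
      have h2 := Finset.card_nsmul_le_sum
        (univ.filter (fun v => ¬ dist (vloc v) (cloc o) < r))
        (fun v => dist (vloc v) (cloc o)) r h1
      rw [nsmul_eq_mul] at h2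
      calc (n - (S.card : ℝ)) * r
          = ((univ.filter fun v => ¬ dist (vloc v) (cloc o) < r).card : ℝ) * r := by
            rw [← hcn]; ring
        _ ≤ _ := h2
    rw [hsplit]
    linarith
  -- final combination
  have hsum : ∑ v ∈ S, (r - dist (vloc v) (cloc o))
      = (S.card : ℝ) * r - ∑ v ∈ S, dist (vloc v) (cloc o) := by
    rw [Finset.sum_sub_distrib, Finset.sum_const, nsmul_eq_mul]
  rw [hsum] at chain1
  have h1mu : (0:ℝ) < 1 + mu σ q := by linarith
  rw [ge_iff_le, div_mul_eq_mul_div, div_mul_eq_mul_div, div_le_iff₀ h1mu]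
  have hm2 := mul_le_mul_of_nonneg_left chain2 hmu0
  nlinarith [chain1, hm2]
end

section
/- Let σ be a preference profile and let a be a candidate in the (p,q)-veto core of σ for arbitrary weight vectors p ∈ Δ(V) and q ∈ Δ(C). Then there exists q' ∈ Δ(C) such that a is in the (p^uni, q')-veto core of σ (i.e., G^σ_{p^uni,q'}(a) admits a fractional perfect matching), and moreover, setting λ = n·max_{v∈V} p(v), one has μ(σ,q') ≥ μ(σ,q)/λ. -/
open Finset

/-- Lemma 3.11 / `lem:genp_unip_reduction`: if `a` is in the
`(p,q)`-veto core for arbitrary `p ∈ Δ(V)` and `q ∈ Δ(C)`, then there is a weight vector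
`q' ∈ Δ(C)` such that `a` is in the `(p^uni, q')`-veto core, and moreover
`μ(σ,q') ≥ μ(σ,q)/λ` where `λ = n·max_v p(v)`. -/
theorem general_p_to_uniform_p_reduction {V C : Type*}
    [Fintype V] [Nonempty V] [Fintype C] [Nonempty C]
    (σ : V → (C ≃ Fin (Fintype.card C)))
    (p : V → ℝ) (hp0 : ∀ v, 0 ≤ p v) (hp1 : ∑ v, p v = 1)
    (q : C → ℝ) (hq0 : ∀ c, 0 ≤ q c) (hq1 : ∑ c, q c = 1)
    (a : C) (ha : inVetoCore σ p q a) :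
    ∃ q' : C → ℝ,
      (∀ c, 0 ≤ q' c) ∧ (∑ c, q' c = 1) ∧
      inVetoCore σ (puni V) q' a ∧
      mu σ q' ≥ mu σ q / ((Fintype.card V : ℝ) * Finset.univ.sup' Finset.univ_nonempty p) := by
  classical
  obtain ⟨w, hw0, hwsupp, hwrow, hwcol⟩ := ha
  set n : ℝ := (Fintype.card V : ℝ) with hn
  have hn0 : (0:ℝ) < n := by
    simp only [hn]; exact_mod_cast Fintype.card_pos
  set M : ℝ := Finset.univ.sup' Finset.univ_nonempty p with hM
  have hpM : ∀ v, p v ≤ M := fun v => Finset.le_sup' p (Finset.mem_univ v)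
  have hlam1 : 1 ≤ n * M := by
    have h : ∑ v, p v ≤ ∑ _v : V, M := Finset.sum_le_sum fun v _ => hpM v
    rw [hp1, Finset.sum_const, Finset.card_univ, nsmul_eq_mul] at h
    exact h
  have hlam0 : (0:ℝ) < n * M := lt_of_lt_of_le one_pos hlam1
  set w' : V → C → ℝ := fun v c =>
    if p v = 0 then (if c = a then 1/n else 0) else w v c / (n * p v) with hw'
  have hw'0 : ∀ v c, 0 ≤ w' v c := by
    intro v c
    simp only [hw']
    split_ifs with h1 h2
    · positivity
    · exact le_refl 0
    · have hpv : 0 < p v := lt_of_le_of_ne (hp0 v) (Ne.symm h1)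
      exact div_nonneg (hw0 v c) (by positivity)
  have hrow : ∀ v, ∑ c, w' v c = 1/n := by
    intro v
    by_cases h : p v = 0
    · simp [hw', h]
    · have hpv : 0 < p v := lt_of_le_of_ne (hp0 v) (Ne.symm h)
      simp only [hw', if_neg h]
      rw [← Finset.sum_div, hwrow v]
      field_simp
  set q' : C → ℝ := fun c => ∑ v, w' v c with hq'
  have hq'0 : ∀ c, 0 ≤ q' c := fun c => Finset.sum_nonneg fun v _ => hw'0 v c
  have hq'1 : ∑ c, q' c = 1 := by
    simp only [hq']
    rw [Finset.sum_comm]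
    simp only [hrow]
    rw [Finset.sum_const, Finset.card_univ, nsmul_eq_mul]
    field_simp
    exact hn.symm
  have hcore : inVetoCore σ (puni V) q' a := by
    refine ⟨w', hw'0, ?_, ?_, fun c => rfl⟩
    · intro v c hne
      simp only [hw'] at hne
      split_ifs at hne with h1 h2
      · exact le_of_eq (by rw [h2])
      · exact absurd rfl hne
      · have : w v c ≠ 0 := fun h0 => hne (by rw [h0]; simp)
        exact hwsupp v c this
    · intro v; rw [hrow v]; rfl
  have hkey : ∀ c, q c ≤ (n * M) * q' c := by
    intro c
    rw [← hwcol c]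
    simp only [hq', Finset.mul_sum]
    refine Finset.sum_le_sum fun v _ => ?_
    simp only [hw']
    by_cases h : p v = 0
    · have hz : w v c = 0 := by
        have := (Finset.sum_eq_zero_iff_of_nonneg (fun c' _ => hw0 v c')).mp
          (by rw [hwrow v, h]) c (Finset.mem_univ c)
        exact this
      rw [hz, if_pos h]
      split_ifs with h2
      · positivity
      · simp
    · have hpv : 0 < p v := lt_of_le_of_ne (hp0 v) (Ne.symm h)
      rw [if_neg h]
      -- goal: w v c ≤ n * M * (w v c / (n * p v))
      have h1 : w v c / (n * M) ≤ w v c / (n * p v) := by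
        apply div_le_div_of_nonneg_left (hw0 v c) (by positivity)
        exact mul_le_mul_of_nonneg_left (hpM v) (le_of_lt hn0)
      calc w v c = (n * M) * (w v c / (n * M)) := by have hM0 : M ≠ 0 := (fun h0 => by rw [h0, mul_zero] at hlam0; exact lt_irrefl 0 hlam0); field_simp
        _ ≤ (n * M) * (w v c / (n * p v)) := by
            exact mul_le_mul_of_nonneg_left h1 (le_of_lt hlam0)
  refine ⟨q', hq'0, hq'1, hcore, ?_⟩
  -- μ part
  obtain ⟨v₀⟩ := ‹Nonempty V›
  have hplu : 0 < plu σ (top σ v₀) := by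
    have : Nonempty {v : V // top σ v = top σ v₀} := ⟨⟨v₀, rfl⟩⟩
    exact Nat.card_pos
  set S : Set ℝ := {x : ℝ | ∃ c : C, 0 < plu σ c ∧ x = q c * n / (plu σ c : ℝ)} with hS
  set S' : Set ℝ := {x : ℝ | ∃ c : C, 0 < plu σ c ∧ x = q' c * n / (plu σ c : ℝ)} with hS'
  have hSbdd : BddBelow S := by
    apply Set.Finite.bddBelow
    apply (Set.finite_range (fun c : C => q c * n / (plu σ c : ℝ))).subset
    rintro x ⟨c, _, rfl⟩
    exact ⟨c, rfl⟩
  have hS'ne : S'.Nonempty := ⟨_, top σ v₀, hplu, rfl⟩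
  show mu σ q' ≥ mu σ q / (n * M)
  have : mu σ q = sInf S := rfl
  rw [this]
  have : mu σ q' = sInf S' := rfl
  rw [this, ge_iff_le]
  apply le_csInf hS'ne
  rintro x ⟨c, hc, rfl⟩
  have hcR : (0:ℝ) < (plu σ c : ℝ) := by exact_mod_cast hc
  have h1 : sInf S ≤ q c * n / (plu σ c : ℝ) := csInf_le hSbdd ⟨c, hc, rfl⟩
  have h2 : q c * n / (plu σ c : ℝ) / (n * M) ≤ q' c * n / (plu σ c : ℝ) := by
    have hqle : q c / (n * M) ≤ q' c := by
      rw [div_le_iff₀ hlam0]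
      linarith [hkey c]
    calc q c * n / (plu σ c : ℝ) / (n * M)
        = (q c / (n * M)) * n / (plu σ c : ℝ) := by ring
      _ ≤ q' c * n / (plu σ c : ℝ) := by gcongr
  calc sInf S / (n * M) ≤ q c * n / (plu σ c : ℝ) / (n * M) := by gcongr
    _ ≤ q' c * n / (plu σ c : ℝ) := h2
end

section
/- For any μ ∈ (0,1] and λ ∈ [1,n] (where n is the number of voters, chosen so that λn/(μ+λ) and μn/(μ+λ) are positive integers), there exist a preference profile σ (on an instance with two candidates), a weight vector q ∈ Δ(C) with μ = min_{c∈C} q(c)·n/plu(c), and a weight vector p ∈ Δ(V) with λ = n·max_v p(v), such that for every ε > 0 there exist a metric d aligned with σ and a candidate a in the (p,q)-veto core of σ satisfying SC(a,d) ≥ (1 + 2λ/μ − ε) · SC(o,d), where o is a candidate minimizing SC(·,d). Hence the distortion upper bound 1 + 2λ/μ for (p,q)-algorithms is tight with respect to the parameters μ and λ. -/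
open Finset

/-! ### Auxiliary machinery for the lower-bound construction -/

lemma card_filter_val_lt' (n k : ℕ) (h : k ≤ n) :
    ((univ : Finset (Fin n)).filter (fun v => v.val < k)).card = k := by
  apply Finset.card_bij (fun (v : Fin n) _ => v.val) (t := Finset.range k) ?_ ?_ ?_
    |>.trans (Finset.card_range k)
  · intro v hv; simp at hv ⊢; exact hv
  · intro a _ b _ hab; exact Fin.ext hab
  · intro b hb; simp at hb; exact ⟨⟨b, lt_of_lt_of_le hb h⟩, by simp [hb], rfl⟩

lemma sum_split' (n k : ℕ) (h : k ≤ n) (A B : ℝ) :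
    ∑ v : Fin n, (if v.val < k then A else B) = k * A + (n - k : ℕ) * B := by
  rw [Finset.sum_ite]
  simp only [Finset.sum_const, nsmul_eq_mul]
  rw [card_filter_val_lt' n k h, Finset.filter_not, Finset.card_sdiff_of_subset (Finset.filter_subset _ _),
    card_filter_val_lt' n k h, Finset.card_univ, Fintype.card_fin]

/-- The lower-bound profile: the first `k1` voters rank candidate `0` first,
the remaining voters rank candidate `1` first. -/
noncomputable def sigLB (n k1 : ℕ) : Fin n → (Fin 2 ≃ Fin (Fintype.card (Fin 2))) :=
  fun v => if v.val < k1 then Equiv.refl (Fin 2) else (Equiv.swap 0 1).trans (Equiv.refl (Fin 2))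

lemma top_sigLB (n k1 : ℕ) (v : Fin n) :
    top (sigLB n k1) v = if v.val < k1 then 0 else 1 := by
  unfold top sigLB
  by_cases hv : v.val < k1 <;> simp only [hv, ↓reduceIte] <;> decide

lemma plu_sigLB_zero (n k1 : ℕ) (h : k1 ≤ n) : plu (sigLB n k1) 0 = k1 := by
  unfold plu
  rw [Nat.card_eq_fintype_card, Fintype.card_subtype]
  rw [show (univ.filter fun v : Fin n => top (sigLB n k1) v = 0)
      = univ.filter (fun v => v.val < k1) from Finset.filter_congr (by
        intro v _; rw [top_sigLB]; split <;> simp <;> omega)]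
  exact card_filter_val_lt' n k1 h

lemma plu_sigLB_one (n k1 : ℕ) (h : k1 ≤ n) : plu (sigLB n k1) 1 = n - k1 := by
  unfold plu
  rw [Nat.card_eq_fintype_card, Fintype.card_subtype]
  rw [show (univ.filter fun v : Fin n => top (sigLB n k1) v = 1)
      = univ.filter (fun v => ¬ v.val < k1) from Finset.filter_congr (by
        intro v _; rw [top_sigLB]; split <;> simp <;> omega)]
  rw [Finset.filter_not, Finset.card_sdiff_of_subset (Finset.filter_subset _ _),
    card_filter_val_lt' n k1 h, Finset.card_univ, Fintype.card_fin]

set_option maxHeartbeats 2000000 in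
/-- Theorem 3.13 / `thm:tightmlowerbound`: the distortion upper bound
`1 + 2λ/μ` for `(p,q)`-algorithms is tight.  For any `μ ∈ (0,1]` and `λ ∈ [1,n]` such that
`λn/(μ+λ)` and `μn/(μ+λ)` are positive integers, there are a preference profile on `n`
voters and two candidates, weight vectors `q ∈ Δ(C)` with `μ = μ(σ,q)` and `p ∈ Δ(V)` with
`λ = n·max_v p(v)`, such that for every `ε > 0` there are a (line) metric aligned with `σ`
and a candidate `a` in the `(p,q)`-veto core with
`SC(a,d) ≥ (1 + 2λ/μ − ε)·SC(o,d)` for an optimal candidate `o`. -/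
theorem vetoCore_distortion_lower_bound (n : ℕ) (hn : 0 < n) (μ lam : ℝ)
    (hμ0 : 0 < μ) (hμ1 : μ ≤ 1) (hlam1 : 1 ≤ lam) (hlamn : lam ≤ (n : ℝ))
    (hint1 : ∃ k : ℕ, 0 < k ∧ (k : ℝ) = lam * n / (μ + lam))
    (hint2 : ∃ k : ℕ, 0 < k ∧ (k : ℝ) = μ * n / (μ + lam)) :
    ∃ (σ : Fin n → (Fin 2 ≃ Fin (Fintype.card (Fin 2)))) (q : Fin 2 → ℝ) (p : Fin n → ℝ),
      (∀ c, 0 ≤ q c) ∧ (∑ c, q c = 1) ∧ (∀ v, 0 ≤ p v) ∧ (∑ v, p v = 1) ∧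
      mu σ q = μ ∧
      (n : ℝ) * Finset.univ.sup' (Finset.univ_nonempty_iff.mpr ⟨⟨0, hn⟩⟩) p = lam ∧
      ∀ ε : ℝ, 0 < ε →
        ∃ (vloc : Fin n → ℝ) (cloc : Fin 2 → ℝ) (a : Fin 2),
          aligned vloc cloc σ ∧ inVetoCore σ p q a ∧
          ∀ o : Fin 2, (∀ c, SC vloc cloc o ≤ SC vloc cloc c) →
            SC vloc cloc a ≥ (1 + 2 * lam / μ - ε) * SC vloc cloc o := by
  obtain ⟨k1, hk1pos, hk1⟩ := hint1
  obtain ⟨k2, hk2pos, hk2⟩ := hint2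
  have hμlam : 0 < μ + lam := by linarith
  have hnR : (0:ℝ) < (n:ℝ) := by exact_mod_cast hn
  have hlam0 : (0:ℝ) < lam := by linarith
  have hkn : k1 + k2 = n := by
    have : ((k1 + k2 : ℕ) : ℝ) = (n : ℝ) := by
      push_cast; rw [hk1, hk2]; field_simp; ring
    exact_mod_cast this
  have hk1n : k1 ≤ n := by omega
  have hk1ltn : k1 < n := by omega
  have hk2' : n - k1 = k2 := by omega
  have hk1R : (0:ℝ) < (k1:ℝ) := by exact_mod_cast hk1pos
  have hk2R : (0:ℝ) < (k2:ℝ) := by exact_mod_cast hk2pos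
  -- numerator facts
  have hnum1 : 0 ≤ μ + lam - μ * lam := by nlinarith
  have hnum2 : (μ + lam - μ * lam) / (lam * (n:ℝ)) ≤ lam / (n:ℝ) := by
    rw [div_le_div_iff₀ (by positivity) hnR]
    nlinarith [mul_nonneg (mul_nonneg (sub_nonneg.mpr hlam1) hμlam.le) hnR.le]
  set q : Fin 2 → ℝ := fun c =>
    if c = 0 then μ * lam / (μ + lam) else (μ + lam - μ * lam) / (μ + lam) with hq
  set p : Fin n → ℝ := fun v =>
    if v.val < k1 then (μ + lam - μ * lam) / (lam * (n:ℝ)) else lam / (n:ℝ) with hp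
  refine ⟨sigLB n k1, q, p, ?_, ?_, ?_, ?_, ?_, ?_, ?_⟩
  · intro c
    simp only [hq]
    split <;> positivity
  · rw [Fin.sum_univ_two]
    simp only [hq, if_pos rfl, if_neg (by decide : (1:Fin 2) ≠ 0)]
    field_simp
    ring
  · intro v
    simp only [hp]
    split <;> positivity
  · simp only [hp]
    rw [sum_split' n k1 hk1n, hk2', hk1, hk2]
    field_simp
    ring
  · -- mu = μ
    unfold mu
    have hplu0 : plu (sigLB n k1) 0 = k1 := plu_sigLB_zero n k1 hk1n
    have hplu1 : plu (sigLB n k1) 1 = n - k1 := plu_sigLB_one n k1 hk1n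
    have hval0 : q 0 * (Fintype.card (Fin n) : ℝ) / ((plu (sigLB n k1) 0 : ℕ) : ℝ) = μ := by
      rw [hplu0, Fintype.card_fin]
      simp only [hq, if_pos rfl]
      rw [hk1]
      field_simp
    have hval1 : q 1 * (Fintype.card (Fin n) : ℝ) / ((plu (sigLB n k1) 1 : ℕ) : ℝ)
        = (μ + lam - μ * lam) / μ := by
      rw [hplu1, hk2', Fintype.card_fin]
      simp only [hq, if_neg (by decide : (1:Fin 2) ≠ 0)]
      rw [hk2]
      field_simp
    have hset : {x : ℝ | ∃ c : Fin 2, 0 < plu (sigLB n k1) c ∧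
        x = q c * (Fintype.card (Fin n) : ℝ) / ((plu (sigLB n k1) c : ℕ) : ℝ)}
        = {μ, (μ + lam - μ * lam) / μ} := by
      ext x
      constructor
      · rintro ⟨c, _, rfl⟩
        fin_cases c
        · left; exact hval0
        · right; exact hval1
      · rintro (rfl | rfl)
        · exact ⟨0, by rw [hplu0]; exact hk1pos, hval0.symm⟩
        · exact ⟨1, by rw [hplu1, hk2']; exact hk2pos, hval1.symm⟩
    rw [hset, csInf_pair]
    refine inf_eq_left.mpr ?_
    rw [le_div_iff₀ hμ0]
    nlinarith
  · -- sup'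
    have hmax : Finset.univ.sup' (Finset.univ_nonempty_iff.mpr ⟨⟨0, hn⟩⟩) p = lam / (n:ℝ) := by
      apply le_antisymm
      · apply Finset.sup'_le
        intro v _
        simp only [hp]
        split
        · exact hnum2
        · exact le_rfl
      · have hv : p ⟨k1, hk1ltn⟩ = lam / (n:ℝ) := by
          simp only [hp]; rw [if_neg (by simp)]
        rw [← hv]
        exact Finset.le_sup' p (Finset.mem_univ _)
    rw [hmax]
    field_simp
  · -- the ε statement
    intro ε hε
    refine ⟨fun v => if v.val < k1 then (0:ℝ) else 1/2,
      fun c => if c = 0 then (0:ℝ) else 1, 1, ?_, ?_, ?_⟩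
    · -- aligned
      intro v c₁ c₂ hlt
      unfold sigLB at hlt
      dsimp only
      by_cases hv : v.val < k1
      · simp only [hv, ↓reduceIte] at hlt
        simp only [if_pos hv]
        fin_cases c₁ <;> fin_cases c₂ <;>
          first
          | exact absurd hlt (by decide)
          | (rw [Real.dist_eq, Real.dist_eq]; norm_num [abs_of_nonneg, abs_of_nonpos])
      · simp only [hv, ↓reduceIte] at hlt
        simp only [if_neg hv]
        fin_cases c₁ <;> fin_cases c₂ <;>
          first
          | exact absurd hlt (by decide)
          | (rw [Real.dist_eq, Real.dist_eq]; norm_num [abs_of_nonneg, abs_of_nonpos])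
    · -- veto core
      refine ⟨fun v c => if v.val < k1 then (if c = 1 then (μ + lam - μ * lam) / (lam * (n:ℝ)) else 0)
          else (if c = 0 then lam / (n:ℝ) else 0), ?_, ?_, ?_, ?_⟩
      · intro v c
        dsimp only
        split_ifs <;> positivity
      · intro v c hw
        dsimp only at hw
        unfold sigLB
        by_cases hv : v.val < k1
        · rw [if_pos hv] at hw
          simp only [hv, ↓reduceIte]
          by_cases hc : c = 1
          · subst hc; exact le_refl _
          · rw [if_neg hc] at hw; exact absurd rfl hw
        · simp only [hv, ↓reduceIte]
          fin_cases c <;> decide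
      · intro v
        rw [Fin.sum_univ_two]
        dsimp only
        simp only [hp]
        by_cases hv : v.val < k1
        · simp only [if_pos hv]
          norm_num
        · simp only [if_neg hv]
          norm_num
      · intro c
        dsimp only
        rw [sum_split' n k1 hk1n, hk2']
        by_cases hc : c = 0
        · subst hc
          simp only [hq, if_pos rfl, if_neg (by decide : (0:Fin 2) ≠ 1), ↓reduceIte]
          rw [hk2]
          field_simp
          ring
        · rw [Fin.eq_one_of_ne_zero c hc]
          simp only [hq, if_pos rfl, if_neg (by decide : (1:Fin 2) ≠ 0), ↓reduceIte]
          rw [hk1]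
          field_simp
          ring
    · -- distortion
      have hSC0 : SC (fun v : Fin n => if v.val < k1 then (0:ℝ) else 1/2)
          (fun c : Fin 2 => if c = 0 then (0:ℝ) else 1) 0 = (k2:ℝ) * (1/2) := by
        unfold SC
        dsimp only
        have : ∀ v : Fin n, dist (if v.val < k1 then (0:ℝ) else 1/2)
            (if (0:Fin 2) = 0 then (0:ℝ) else 1) = (if v.val < k1 then (0:ℝ) else 1/2) := by
          intro v; split <;> simp [Real.dist_eq] <;> norm_num
        rw [Finset.sum_congr rfl (fun v _ => this v), sum_split' n k1 hk1n, hk2']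
        ring
      have hSC1 : SC (fun v : Fin n => if v.val < k1 then (0:ℝ) else 1/2)
          (fun c : Fin 2 => if c = 0 then (0:ℝ) else 1) 1 = (k1:ℝ) + (k2:ℝ) * (1/2) := by
        unfold SC
        dsimp only
        have : ∀ v : Fin n, dist (if v.val < k1 then (0:ℝ) else 1/2)
            (if (1:Fin 2) = 0 then (0:ℝ) else 1) = (if v.val < k1 then (1:ℝ) else 1/2) := by
          intro v; split <;> simp [Real.dist_eq] <;> norm_num
        rw [Finset.sum_congr rfl (fun v _ => this v), sum_split' n k1 hk1n, hk2']
        ring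
      have hk1k2 : (k1:ℝ) * μ = lam * (k2:ℝ) := by
        rw [hk1, hk2]; field_simp
      intro o ho
      by_cases hoc : o = 0
      · subst hoc
        rw [hSC0, hSC1, ge_iff_le]
        have h1 : (1 + 2 * lam / μ - ε) * ((k2:ℝ) * (1/2))
            ≤ (1 + 2 * lam / μ) * ((k2:ℝ) * (1/2)) := by nlinarith
        refine h1.trans ?_
        have hlmk : (lam / μ) * (k2:ℝ) = (k1:ℝ) := by
          rw [div_mul_eq_mul_div, div_eq_iff (ne_of_gt hμ0)]
          linarith [hk1k2]
        have hexp : (1 + 2 * lam / μ) * ((k2:ℝ) * (1/2)) = (k2:ℝ) * (1/2) + (lam / μ) * k2 := by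
          ring
        rw [hexp, hlmk]
        linarith
      · exfalso
        have h0 := ho 0
        rw [Fin.eq_one_of_ne_zero o hoc] at h0
        rw [hSC0, hSC1] at h0
        linarith
end

section
/- Fix δ ∈ [0,1) and a predicted candidate ĉ ∈ C, and let q̂ ∈ Δ(C) be the BoostedSimVeto weight vector for δ and ĉ. For any candidate a in the (p^uni, q̂)-veto core of σ and any metric d aligned with σ such that the prediction is accurate (ĉ = o, a candidate minimizing SC(·,d)), it holds that SC(a,d) ≤ ((3−δ)/(1+δ)) · SC(o,d). That is, BoostedSimVeto is ((3−δ)/(1+δ))-consistent. -/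
open Finset

/-- consistency part of Theorem 4.3 / `thm:optimal_algorithm`: for
`δ ∈ [0,1)`, any candidate in the `(p^uni, q̂)`-veto core — where `q̂` is the
BoostedSimVeto weight vector for `δ` and the predicted candidate `ĉ` — satisfies
`SC(a,d) ≤ ((3−δ)/(1+δ))·SC(o,d)` whenever the prediction is accurate (`ĉ = o`).
That is, BoostedSimVeto is `((3−δ)/(1+δ))`-consistent. -/
theorem boostedSimVeto_consistency {V C X : Type*}
    [Fintype V] [Nonempty V] [Fintype C] [Nonempty C] [DecidableEq C] [MetricSpace X]
    (σ : V → (C ≃ Fin (Fintype.card C)))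
    (δ : ℝ) (hδ0 : 0 ≤ δ) (hδ1 : δ < 1) (chat : C)
    (a : C) (ha : inVetoCore σ (puni V) (qhat σ δ chat) a)
    (vloc : V → X) (cloc : C → X) (hal : aligned vloc cloc σ)
    (o : C) (ho : ∀ c, SC vloc cloc o ≤ SC vloc cloc c)
    (hacc : chat = o) :
    SC vloc cloc a ≤ ((3 - δ) / (1 + δ)) * SC vloc cloc o := by

  classical
  obtain ⟨w, hw0, hdom, hrow, hcol⟩ := ha
  have hnpos : (0:ℝ) < (Fintype.card V : ℝ) := by
    exact_mod_cast Fintype.card_pos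
  have hd1 : (0:ℝ) < 1 - δ := by linarith
  have hd2 : (0:ℝ) < 1 + δ := by linarith
  set n : ℝ := (Fintype.card V : ℝ) with hn
  set D : C → ℝ := fun c => dist (cloc o) (cloc c) with hD
  -- if w v c ≠ 0 then d(v,a) ≤ d(v,c)
  have hva : ∀ v c, w v c * dist (vloc v) (cloc a) ≤ w v c * dist (vloc v) (cloc c) := by
    intro v c
    by_cases h : w v c = 0
    · simp [h]
    · refine mul_le_mul_of_nonneg_left ?_ (hw0 v c)
      rcases lt_or_eq_of_le (hdom v c h) with hlt | heq
      · exact hal v a c hlt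
      · rw [(σ v).injective heq]
  have key1 : SC vloc cloc a = n * ∑ v, ∑ c, w v c * dist (vloc v) (cloc a) := by
    rw [SC, Finset.mul_sum]
    refine Finset.sum_congr rfl (fun v _ => ?_)
    rw [← Finset.sum_mul, hrow v]
    simp only [puni]
    field_simp
    rfl
  have key2 : ∀ v, ∑ c, w v c * dist (vloc v) (cloc c)
      ≤ ∑ c, w v c * (dist (vloc v) (cloc o) + D c) := by
    intro v
    refine Finset.sum_le_sum (fun c _ => ?_)
    refine mul_le_mul_of_nonneg_left ?_ (hw0 v c)
    exact dist_triangle _ _ _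
  have key3 : ∀ v, ∑ c, w v c * (dist (vloc v) (cloc o) + D c)
      = (1/n) * dist (vloc v) (cloc o) + ∑ c, w v c * D c := by
    intro v
    simp only [mul_add, Finset.sum_add_distrib, ← Finset.sum_mul, hrow v, puni]
    rfl
  have key4 : ∑ v, ∑ c, w v c * D c = ∑ c, qhat σ δ chat c * D c := by
    rw [Finset.sum_comm]
    refine Finset.sum_congr rfl (fun c _ => ?_)
    rw [← Finset.sum_mul, hcol c]
  have hDchat : D chat = 0 := by
    simp [hD, hacc]
  have key5 : n * ∑ c, qhat σ δ chat c * D c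
      = ((1 - δ) / (1 + δ)) * ∑ c, (plu σ c : ℝ) * D c := by
    rw [Finset.mul_sum, Finset.mul_sum]
    refine Finset.sum_congr rfl (fun c _ => ?_)
    by_cases h : c = chat
    · rw [h, hDchat]; ring
    · simp only [qhat, if_neg h]
      field_simp
      ring
  -- plurality as a filter card
  have hplu : ∀ c, (plu σ c : ℝ)
      = ((Finset.univ.filter (fun v => top σ v = c)).card : ℝ) := by
    intro c
    rw [plu, Nat.card_eq_fintype_card, Fintype.card_subtype]
  have hA : ∑ c, (plu σ c : ℝ) * D c = ∑ v, D (top σ v) := by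
    rw [← Finset.sum_fiberwise_of_maps_to (g := fun v => top σ v)
      (fun v _ => Finset.mem_univ (top σ v)) (fun v => D (top σ v))]
    refine Finset.sum_congr rfl (fun c _ => ?_)
    rw [hplu c]
    have heq : ∑ v ∈ Finset.univ.filter (fun v => top σ v = c), D (top σ v)
        = ∑ v ∈ Finset.univ.filter (fun v => top σ v = c), D c :=
      Finset.sum_congr rfl (fun v hv => by rw [(Finset.mem_filter.mp hv).2])
    rw [heq, Finset.sum_const, nsmul_eq_mul]
  have hB : ∀ v, D (top σ v) ≤ 2 * dist (vloc v) (cloc o) := by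
    intro v
    have htop : dist (vloc v) (cloc (top σ v)) ≤ dist (vloc v) (cloc o) := by
      by_cases h : top σ v = o
      · rw [h]
      · refine hal v _ _ ?_
        have h0 : σ v (top σ v) = ⟨0, Fintype.card_pos⟩ := (σ v).apply_symm_apply _
        rw [h0, Fin.lt_def]
        refine Nat.pos_of_ne_zero (fun hz => ?_)
        apply h
        apply (σ v).injective
        rw [h0]
        exact Fin.ext hz.symm
    calc D (top σ v) ≤ dist (cloc o) (vloc v) + dist (vloc v) (cloc (top σ v)) :=
          dist_triangle _ _ _
      _ ≤ 2 * dist (vloc v) (cloc o) := by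
          rw [dist_comm (cloc o) (vloc v)]; linarith
  have hA2 : ∑ c, (plu σ c : ℝ) * D c ≤ 2 * SC vloc cloc o := by
    rw [hA, SC, Finset.mul_sum]
    exact Finset.sum_le_sum (fun v _ => hB v)
  -- combine
  have step : SC vloc cloc a ≤ SC vloc cloc o
      + ((1 - δ) / (1 + δ)) * ∑ c, (plu σ c : ℝ) * D c := by
    rw [key1]
    have h1 : ∑ v, ∑ c, w v c * dist (vloc v) (cloc a)
        ≤ ∑ v, ((1/n) * dist (vloc v) (cloc o) + ∑ c, w v c * D c) := by
      refine Finset.sum_le_sum (fun v _ => ?_)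
      calc ∑ c, w v c * dist (vloc v) (cloc a)
          ≤ ∑ c, w v c * dist (vloc v) (cloc c) :=
            Finset.sum_le_sum (fun c _ => hva v c)
        _ ≤ ∑ c, w v c * (dist (vloc v) (cloc o) + D c) := key2 v
        _ = (1/n) * dist (vloc v) (cloc o) + ∑ c, w v c * D c := key3 v
    have h2 : n * ∑ v, ((1/n) * dist (vloc v) (cloc o) + ∑ c, w v c * D c)
        = SC vloc cloc o + ((1 - δ) / (1 + δ)) * ∑ c, (plu σ c : ℝ) * D c := by
      rw [Finset.sum_add_distrib, mul_add, key4, key5, SC, ← Finset.mul_sum,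
        ← mul_assoc, mul_one_div, div_self (ne_of_gt hnpos), one_mul]
    calc n * ∑ v, ∑ c, w v c * dist (vloc v) (cloc a)
        ≤ n * ∑ v, ((1/n) * dist (vloc v) (cloc o) + ∑ c, w v c * D c) :=
          mul_le_mul_of_nonneg_left h1 (le_of_lt hnpos)
      _ = _ := h2
  have hcoef : (0:ℝ) ≤ (1 - δ) / (1 + δ) := by positivity
  have final : SC vloc cloc o + ((1 - δ) / (1 + δ)) * (2 * SC vloc cloc o)
      = ((3 - δ) / (1 + δ)) * SC vloc cloc o := by
    field_simp
    ring
  calc SC vloc cloc a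
      ≤ SC vloc cloc o + ((1 - δ) / (1 + δ)) * ∑ c, (plu σ c : ℝ) * D c := step
    _ ≤ SC vloc cloc o + ((1 - δ) / (1 + δ)) * (2 * SC vloc cloc o) := by
        have := mul_le_mul_of_nonneg_left hA2 hcoef
        linarith
    _ = ((3 - δ) / (1 + δ)) * SC vloc cloc o := final
end

section
/- Fix δ ∈ [0,1) and any predicted candidate ĉ ∈ C, and let q̂ ∈ Δ(C) be the BoostedSimVeto weight vector for δ and ĉ. For any candidate a in the (p^uni, q̂)-veto core of σ and any metric d aligned with σ, SC(a,d) ≤ ((3+δ)/(1−δ)) · SC(o,d), where o is a candidate minimizing SC(·,d). That is, BoostedSimVeto is ((3+δ)/(1−δ))-robust, regardless of the accuracy of the prediction. -/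
set_option linter.unusedSectionVars false
set_option linter.unusedVariables false
set_option linter.unusedTactic false
set_option maxHeartbeats 1000000


open Finset

section helpers
variable {V C X : Type*} [Fintype C] [Nonempty C] [MetricSpace X]

lemma dist_mono_of_rank {vloc : V → X} {cloc : C → X}
    {σ : V → (C ≃ Fin (Fintype.card C))} (hal : aligned vloc cloc σ)
    {v : V} {c₁ c₂ : C} (h : σ v c₁ ≤ σ v c₂) :
    dist (vloc v) (cloc c₁) ≤ dist (vloc v) (cloc c₂) := by
  rcases lt_or_eq_of_le h with h | h
  · exact hal v c₁ c₂ h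
  · rw [(σ v).injective h]

lemma top_rank_le (σ : V → (C ≃ Fin (Fintype.card C))) (v : V) (c : C) :
    σ v (top σ v) ≤ σ v c := by
  have h : σ v (top σ v) = ⟨0, Fintype.card_pos⟩ := (σ v).apply_symm_apply _
  rw [h]
  exact Fin.mk_le_of_le_val (Nat.zero_le _)

lemma plu_eq_card [DecidableEq C] [Fintype V] (σ : V → (C ≃ Fin (Fintype.card C))) (c : C) :
    plu σ c = (Finset.univ.filter (fun v => top σ v = c)).card := by
  rw [plu, Nat.card_eq_fintype_card, Fintype.card_subtype]

end helpers

/-- robustness part of Theorem 4.3 / `thm:optimal_algorithm`: for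
`δ ∈ [0,1)` and any predicted candidate `ĉ`, any candidate in the `(p^uni, q̂)`-veto core —
where `q̂` is the BoostedSimVeto weight vector for `δ` and `ĉ` — satisfies
`SC(a,d) ≤ ((3+δ)/(1−δ))·SC(o,d)` for every aligned metric, regardless of the accuracy
of the prediction.  That is, BoostedSimVeto is `((3+δ)/(1−δ))`-robust. -/
theorem boostedSimVeto_robustness {V C X : Type*}
    [Fintype V] [Nonempty V] [Fintype C] [Nonempty C] [DecidableEq C] [MetricSpace X]
    (σ : V → (C ≃ Fin (Fintype.card C)))
    (δ : ℝ) (hδ0 : 0 ≤ δ) (hδ1 : δ < 1) (chat : C)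
    (a : C) (ha : inVetoCore σ (puni V) (qhat σ δ chat) a)
    (vloc : V → X) (cloc : C → X) (hal : aligned vloc cloc σ)
    (o : C) (ho : ∀ c, SC vloc cloc o ≤ SC vloc cloc c) :
    SC vloc cloc a ≤ ((3 + δ) / (1 - δ)) * SC vloc cloc o := by
  classical
  obtain ⟨w, hw0, hwpref, hwrow, hwcol⟩ := ha
  set n : ℝ := (Fintype.card V : ℝ) with hn
  have hnpos : 0 < n := by
    rw [hn]; exact_mod_cast Fintype.card_pos
  have h1δ : (0:ℝ) < 1 - δ := by linarith
  have h1δ' : (0:ℝ) < 1 + δ := by linarith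
  set μ : ℝ := (1 - δ) / (1 + δ) with hμ
  have hμpos : 0 < μ := div_pos h1δ h1δ'
  have hμle : μ ≤ 1 := by rw [hμ, div_le_one h1δ']; linarith
  set P : C → ℝ := fun c => (plu σ c : ℝ) with hP
  have hP0 : ∀ c, 0 ≤ P c := fun c => Nat.cast_nonneg _
  -- q̂ dominates μ·plu/n
  have hqge : ∀ c, μ * P c / n ≤ qhat σ δ chat c := by
    intro c
    simp only [qhat, ← hn, ← hμ, ← hP]
    split
    · next h =>
      subst h
      have h2 : (0:ℝ) ≤ 2 * δ * n / (1 - δ) := by positivity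
      gcongr μ * ?_ / n
      all_goals try positivity
      show P c ≤ P c + 2 * δ * n / (1 - δ)
      linarith
    · exact le_refl _
  have hq0 : ∀ c, 0 ≤ qhat σ δ chat c := by
    intro c
    refine le_trans ?_ (hqge c)
    positivity
  have hqzero : ∀ c, qhat σ δ chat c = 0 → P c = 0 := by
    intro c hc
    have h1 : μ * P c / n ≤ 0 := hc ▸ hqge c
    have h2 : 0 ≤ μ * P c / n := by positivity
    have h3 : μ * P c / n = 0 := le_antisymm h1 h2
    have h4 : μ * P c = 0 := by
      field_simp at h3; linarith
    rcases mul_eq_zero.1 h4 with h | h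
    · exact absurd h (ne_of_gt hμpos)
    · exact h
  -- the rescaled matching
  set w' : V → C → ℝ := fun v c => w v c * (μ * P c / n) / qhat σ δ chat c with hw'
  have hw'0 : ∀ v c, 0 ≤ w' v c := by
    intro v c
    have := hw0 v c; have := hP0 c; have := hq0 c
    simp only [hw']
    positivity
  have hw'le : ∀ v c, w' v c ≤ w v c := by
    intro v c
    by_cases hq : qhat σ δ chat c = 0
    · simp [hw', hq, hw0 v c]
    · have hqpos : 0 < qhat σ δ chat c := lt_of_le_of_ne (hq0 c) (Ne.symm hq)
      have hfac : (μ * P c / n) / qhat σ δ chat c ≤ 1 := by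
        rw [div_le_one hqpos]; exact hqge c
      calc w' v c = w v c * ((μ * P c / n) / qhat σ δ chat c) := by
            simp only [hw']; ring
        _ ≤ w v c * 1 := mul_le_mul_of_nonneg_left hfac (hw0 v c)
        _ = w v c := mul_one _
  have hcol' : ∀ c, ∑ v, w' v c = μ * P c / n := by
    intro c
    by_cases hq : qhat σ δ chat c = 0
    · have hPc := hqzero c hq
      simp [hw', hq, hPc]
    · have : ∑ v, w' v c = (∑ v, w v c) * (μ * P c / n) / qhat σ δ chat c := by
        simp only [hw']
        rw [← Finset.sum_div, ← Finset.sum_mul]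
      rw [this, hwcol, mul_div_assoc, mul_comm, div_mul_cancel₀ _ hq]
  set r : V → ℝ := fun v => ∑ c, w' v c with hr
  have hr0 : ∀ v, 0 ≤ r v := fun v => Finset.sum_nonneg fun c _ => hw'0 v c
  have hrle : ∀ v, r v ≤ 1 / n := by
    intro v
    have := hwrow v
    simp only [puni, ← hn] at this
    calc r v ≤ ∑ c, w v c := Finset.sum_le_sum fun c _ => hw'le v c
      _ = 1 / n := this
  have hplusum : ∑ c, P c = n := by
    have hnat : ∑ c, plu σ c = Fintype.card V := by
      rw [← Finset.card_univ (α := V),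
        Finset.card_eq_sum_card_fiberwise (f := top σ) (t := Finset.univ)
          (fun x _ => Finset.mem_univ _)]
      exact Finset.sum_congr rfl fun c _ => plu_eq_card σ c
    have := congrArg (Nat.cast : ℕ → ℝ) hnat
    push_cast at this
    exact this
  have hrtot : ∑ v, r v = μ := by
    simp only [hr]
    rw [Finset.sum_comm]
    calc ∑ c, ∑ v, w' v c = ∑ c, μ * P c / n := Finset.sum_congr rfl fun c _ => hcol' c
      _ = (μ / n) * ∑ c, P c := by rw [Finset.mul_sum]; exact Finset.sum_congr rfl fun c _ => by ring
      _ = μ := by rw [hplusum]; field_simp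
  -- the fiber sums
  set S : C → ℝ := fun c => ∑ u ∈ Finset.univ.filter (fun u => top σ u = c), dist (vloc u) (cloc o)
    with hS
  have hS0 : ∀ c, 0 ≤ S c := fun c => Finset.sum_nonneg fun u _ => dist_nonneg
  set T : C → ℝ := fun c => S c / P c with hT
  have hT0 : ∀ c, 0 ≤ T c := fun c => div_nonneg (hS0 c) (hP0 c)
  have hSsum : ∑ c, S c = SC vloc cloc o := by
    simp only [hS, SC]
    exact Finset.sum_fiberwise_of_maps_to (fun u _ => Finset.mem_univ _) _
  have hTbound : ∀ c, P c ≠ 0 → dist (cloc o) (cloc c) ≤ 2 * T c := by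
    intro c hPc
    have hPcpos : 0 < P c := lt_of_le_of_ne (hP0 c) (Ne.symm hPc)
    have hcard : P c * dist (cloc o) (cloc c) ≤ 2 * S c := by
      have h1 : ∀ u ∈ Finset.univ.filter (fun u => top σ u = c),
          dist (cloc o) (cloc c) ≤ 2 * dist (vloc u) (cloc o) := by
        intro u hu
        rw [Finset.mem_filter] at hu
        have htop : σ u c ≤ σ u o := hu.2 ▸ top_rank_le σ u o
        have h2 : dist (vloc u) (cloc c) ≤ dist (vloc u) (cloc o) :=
          dist_mono_of_rank hal htop
        have h3 : dist (cloc o) (cloc c) ≤ dist (cloc o) (vloc u) + dist (vloc u) (cloc c) :=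
          dist_triangle _ _ _
        rw [dist_comm (cloc o) (vloc u)] at h3
        linarith
      have h4 := Finset.card_nsmul_le_sum _ _ _ h1
      have h5 : ((Finset.univ.filter (fun u => top σ u = c)).card : ℝ) * dist (cloc o) (cloc c)
          ≤ ∑ u ∈ Finset.univ.filter (fun u => top σ u = c), 2 * dist (vloc u) (cloc o) := by
        rw [nsmul_eq_mul] at h4
        exact h4
      calc P c * dist (cloc o) (cloc c)
          = ((Finset.univ.filter (fun u => top σ u = c)).card : ℝ) * dist (cloc o) (cloc c) := by
            simp only [hP]; rw [plu_eq_card σ c]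
        _ ≤ ∑ u ∈ Finset.univ.filter (fun u => top σ u = c), 2 * dist (vloc u) (cloc o) := h5
        _ = 2 * S c := by rw [← Finset.mul_sum]
    show dist (cloc o) (cloc c) ≤ 2 * (S c / P c)
    rw [← mul_div_assoc, le_div_iff₀ hPcpos]
    linarith [hcard]
  set doa : ℝ := dist (cloc o) (cloc a) with hdoa
  -- per-edge inequality
  have hedge : ∀ v c, w' v c * dist (vloc v) (cloc a)
      ≤ w' v c * (dist (vloc v) (cloc o) + 2 * T c) := by
    intro v c
    by_cases hz : w' v c = 0
    · rw [hz, zero_mul, zero_mul]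
    · have hwvc : w v c ≠ 0 := by
        intro h; apply hz; simp [hw', h]
      have hPc : P c ≠ 0 := by
        intro h; apply hz; simp [hw', h]
      have h1 : dist (vloc v) (cloc a) ≤ dist (vloc v) (cloc c) :=
        dist_mono_of_rank hal (hwpref v c hwvc)
      have h2 : dist (vloc v) (cloc c) ≤ dist (vloc v) (cloc o) + dist (cloc o) (cloc c) :=
        dist_triangle _ _ _
      have h3 := hTbound c hPc
      exact mul_le_mul_of_nonneg_left (by linarith) (hw'0 v c)
  -- decompose SC a / n
  have H0 : SC vloc cloc a / n =
      (∑ v, ∑ c, w' v c * dist (vloc v) (cloc a)) +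
      ∑ v, (1 / n - r v) * dist (vloc v) (cloc a) := by
    rw [SC, Finset.sum_div, ← Finset.sum_add_distrib]
    apply Finset.sum_congr rfl
    intro v _
    rw [← Finset.sum_mul]
    show dist (vloc v) (cloc a) / n
        = r v * dist (vloc v) (cloc a) + (1 / n - r v) * dist (vloc v) (cloc a)
    ring
  have hTsum : ∑ c, (μ * P c / n) * T c = (μ / n) * SC vloc cloc o := by
    have hPT : ∀ c, P c * T c = S c := by
      intro c
      by_cases hPc : P c = 0
      · have hScz : S c = 0 := by
          have hcard0 : (Finset.univ.filter (fun u => top σ u = c)).card = 0 := by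
            have : (plu σ c : ℝ) = 0 := hPc
            rw [plu_eq_card σ c] at this
            exact_mod_cast this
          rw [hS]
          simp only [Finset.card_eq_zero.1 hcard0, Finset.sum_empty]
        simp [hT, hPc, hScz]
      · show P c * (S c / P c) = S c
        field_simp
    calc ∑ c, (μ * P c / n) * T c = ∑ c, (μ / n) * (P c * T c) := by
          apply Finset.sum_congr rfl; intro c _; ring
      _ = (μ / n) * ∑ c, S c := by
          rw [Finset.mul_sum]
          exact Finset.sum_congr rfl fun c _ => by rw [hPT c]
      _ = (μ / n) * SC vloc cloc o := by rw [hSsum]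
  have H1 : ∑ v, ∑ c, w' v c * dist (vloc v) (cloc a)
      ≤ (∑ v, r v * dist (vloc v) (cloc o)) + 2 * ((μ / n) * SC vloc cloc o) := by
    calc ∑ v, ∑ c, w' v c * dist (vloc v) (cloc a)
        ≤ ∑ v, ∑ c, w' v c * (dist (vloc v) (cloc o) + 2 * T c) :=
          Finset.sum_le_sum fun v _ => Finset.sum_le_sum fun c _ => hedge v c
      _ = ∑ v, ∑ c, (w' v c * dist (vloc v) (cloc o) + 2 * (w' v c * T c)) := by
          apply Finset.sum_congr rfl; intro v _
          apply Finset.sum_congr rfl; intro c _; ring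
      _ = (∑ v, ∑ c, w' v c * dist (vloc v) (cloc o)) + 2 * ∑ v, ∑ c, w' v c * T c := by
          simp only [Finset.sum_add_distrib, ← Finset.mul_sum]
      _ = (∑ v, r v * dist (vloc v) (cloc o)) + 2 * ((μ / n) * SC vloc cloc o) := by
          congr 1
          · apply Finset.sum_congr rfl; intro v _
            rw [← Finset.sum_mul]
          · rw [Finset.sum_comm]
            rw [← hTsum]
            congr 1
            apply Finset.sum_congr rfl; intro c _
            rw [← Finset.sum_mul, hcol' c]
  have H2 : ∑ v, (1 / n - r v) * dist (vloc v) (cloc a)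
      ≤ SC vloc cloc o / n - (∑ v, r v * dist (vloc v) (cloc o)) + (1 - μ) * doa := by
    calc ∑ v, (1 / n - r v) * dist (vloc v) (cloc a)
        ≤ ∑ v, (1 / n - r v) * (dist (vloc v) (cloc o) + doa) := by
          apply Finset.sum_le_sum; intro v _
          have h1 : dist (vloc v) (cloc a) ≤ dist (vloc v) (cloc o) + doa :=
            dist_triangle (vloc v) (cloc o) (cloc a)
          exact mul_le_mul_of_nonneg_left h1 (by linarith [hrle v])
      _ = ∑ v, ((1 / n) * dist (vloc v) (cloc o) - r v * dist (vloc v) (cloc o)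
            + ((1 / n) * doa - r v * doa)) := by
          apply Finset.sum_congr rfl; intro v _; ring
      _ = SC vloc cloc o / n - (∑ v, r v * dist (vloc v) (cloc o)) + (1 - μ) * doa := by
          simp only [Finset.sum_add_distrib, Finset.sum_sub_distrib]
          have e1 : ∑ v : V, (1 / n) * dist (vloc v) (cloc o) = SC vloc cloc o / n := by
            rw [SC, Finset.sum_div, ← Finset.mul_sum, Finset.mul_sum]
            apply Finset.sum_congr rfl; intro v _; ring
          have e2 : ∑ _v : V, (1 / n) * doa = doa := by
            rw [Finset.sum_const, Finset.card_univ, nsmul_eq_mul, ← hn]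
            field_simp
          have e3 : ∑ v : V, r v * doa = μ * doa := by
            rw [← Finset.sum_mul, hrtot]
          rw [e1, e2, e3]
          ring
  have Hmain : SC vloc cloc a / n
      ≤ SC vloc cloc o / n + 2 * ((μ / n) * SC vloc cloc o) + (1 - μ) * doa := by
    rw [H0]; linarith [H1, H2]
  have Hdoa : n * doa ≤ SC vloc cloc o + SC vloc cloc a := by
    have h1 : ∀ v ∈ (Finset.univ : Finset V),
        doa ≤ dist (vloc v) (cloc o) + dist (vloc v) (cloc a) := by
      intro v _
      have := dist_triangle (cloc o) (vloc v) (cloc a)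
      rw [dist_comm (cloc o) (vloc v)] at this
      exact this
    have h2 := Finset.card_nsmul_le_sum _ _ _ h1
    rw [nsmul_eq_mul, Finset.card_univ, Finset.sum_add_distrib] at h2
    rw [SC, SC, hn]
    exact h2
  have h1 : SC vloc cloc a ≤ SC vloc cloc o + 2 * μ * SC vloc cloc o + (1 - μ) * (n * doa) := by
    have h' := (div_le_iff₀ hnpos).1 Hmain
    calc SC vloc cloc a
        = SC vloc cloc a / n * n := by field_simp
      _ ≤ (SC vloc cloc o / n + 2 * ((μ / n) * SC vloc cloc o) + (1 - μ) * doa) * n := by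
          exact mul_le_mul_of_nonneg_right Hmain (le_of_lt hnpos)
      _ = SC vloc cloc o + 2 * μ * SC vloc cloc o + (1 - μ) * (n * doa) := by
          field_simp
  have h1μ : 0 ≤ 1 - μ := by linarith
  have h2 : (1 - μ) * (n * doa) ≤ (1 - μ) * (SC vloc cloc o + SC vloc cloc a) :=
    mul_le_mul_of_nonneg_left Hdoa h1μ
  have h3 : μ * SC vloc cloc a ≤ (2 + μ) * SC vloc cloc o := by nlinarith [h1, h2]
  have hμc : μ * (1 + δ) = 1 - δ := div_mul_cancel₀ _ (ne_of_gt h1δ')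
  rw [div_mul_eq_mul_div, le_div_iff₀ h1δ]
  have h4 := mul_le_mul_of_nonneg_right h3 (le_of_lt h1δ')
  calc SC vloc cloc a * (1 - δ) = μ * SC vloc cloc a * (1 + δ) := by
        rw [← hμc]; ring
    _ ≤ (2 + μ) * SC vloc cloc o * (1 + δ) := h4
    _ = (3 + δ) * SC vloc cloc o := by
        have hexp : (2 + μ) * (1 + δ) = 3 + δ := by linear_combination hμc
        rw [mul_right_comm, hexp]
end

section
/- Fix δ ∈ [0,1) and a predicted candidate ĉ ∈ C, and let q̂ ∈ Δ(C) be the BoostedSimVeto weight vector for δ and ĉ. For any candidate a in the (p^uni, q̂)-veto core of σ and any metric d aligned with σ, if the prediction error is η = n·d(ĉ,o)/SC(o,d), then SC(a,d) ≤ min{ (3−δ+2δη)/(1+δ), (3+δ)/(1−δ) } · SC(o,d), where o is a candidate minimizing SC(·,d). -/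
open Finset

section Aux

lemma plu_mul_sum {V C : Type*} [Fintype V] [Fintype C] [Nonempty C] [DecidableEq C]
    (σ : V → (C ≃ Fin (Fintype.card C))) (f : C → ℝ) :
    ∑ c, (plu σ c : ℝ) * f c = ∑ v, f (top σ v) := by
  have h : ∀ c : C, (plu σ c : ℝ) * f c
      = ∑ _v ∈ Finset.univ.filter (fun v => top σ v = c), f c := by
    intro c
    rw [Finset.sum_const, nsmul_eq_mul]
    congr 1
    norm_cast
    rw [plu, Nat.card_eq_fintype_card, Fintype.card_subtype]
  rw [Finset.sum_congr rfl (fun c _ => h c),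
    Finset.sum_fiberwise_eq_sum_filter' Finset.univ Finset.univ (top σ) f]
  simp

lemma top_min {V C X : Type*} [Fintype C] [Nonempty C] [MetricSpace X]
    (σ : V → (C ≃ Fin (Fintype.card C))) (vloc : V → X) (cloc : C → X)
    (hal : aligned vloc cloc σ) (v : V) (c : C) :
    dist (vloc v) (cloc (top σ v)) ≤ dist (vloc v) (cloc c) := by
  rcases lt_or_eq_of_le (show σ v (top σ v) ≤ σ v c by
      simp only [top, Equiv.apply_symm_apply]
      exact Fin.mk_le_of_le_val (Nat.zero_le _)) with h | h
  · exact hal v _ _ h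
  · have : top σ v = c := (σ v).injective h
    rw [this]

end Aux

/-- Proposition 4.4 / `prop:error`: for `δ ∈ [0,1)` and predicted
candidate `ĉ` with prediction error `η = n·d(ĉ,o)/SC(o,d)`, any candidate in the
`(p^uni, q̂)`-veto core (with `q̂` the BoostedSimVeto weight vector) satisfies
`SC(a,d) ≤ min{(3−δ+2δη)/(1+δ), (3+δ)/(1−δ)}·SC(o,d)`. -/
theorem boostedSimVeto_error_bound {V C X : Type*}
    [Fintype V] [Nonempty V] [Fintype C] [Nonempty C] [DecidableEq C] [MetricSpace X]
    (σ : V → (C ≃ Fin (Fintype.card C)))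
    (δ : ℝ) (hδ0 : 0 ≤ δ) (hδ1 : δ < 1) (chat : C)
    (a : C) (ha : inVetoCore σ (puni V) (qhat σ δ chat) a)
    (vloc : V → X) (cloc : C → X) (hal : aligned vloc cloc σ)
    (o : C) (ho : ∀ c, SC vloc cloc o ≤ SC vloc cloc c)
    (η : ℝ) (hη : η = (Fintype.card V : ℝ) * dist (cloc chat) (cloc o) / SC vloc cloc o) :
    SC vloc cloc a ≤
      min ((3 - δ + 2 * δ * η) / (1 + δ)) ((3 + δ) / (1 - δ)) * SC vloc cloc o := by
  classical
  obtain ⟨w, hw0, hwa, hrow, hcol⟩ := ha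
  set n : ℝ := (Fintype.card V : ℝ) with hn_def
  have hn : (0:ℝ) < n := by
    rw [hn_def]
    exact_mod_cast Fintype.card_pos (α := V)
  have h1δ : (0:ℝ) < 1 + δ := by linarith
  have h1δ' : (0:ℝ) < 1 - δ := by linarith
  set S := SC vloc cloc a with hS_def
  set So := SC vloc cloc o with hSo_def
  have hSo0 : 0 ≤ So := Finset.sum_nonneg fun v _ => dist_nonneg
  set A : ℝ := (1 - δ) / (1 + δ) with hA_def
  have hA0 : 0 ≤ A := le_of_lt (div_pos h1δ' h1δ)
  set M : ℝ := min (dist (cloc o) (cloc chat)) (dist (cloc o) (cloc a)) with hM_def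
  have hM0 : 0 ≤ M := le_min dist_nonneg dist_nonneg
  set g : C → ℝ := fun c => if c = chat then M else dist (cloc o) (cloc c) with hg_def
  have halign : ∀ v c, w v c ≠ 0 → dist (vloc v) (cloc a) ≤ dist (vloc v) (cloc c) := by
    intro v c hvc
    rcases lt_or_eq_of_le (hwa v c hvc) with h | h
    · exact hal v _ _ h
    · have : a = c := (σ v).injective h
      rw [this]
  have hedge : ∀ v c, w v c * dist (vloc v) (cloc a)
      ≤ w v c * dist (vloc v) (cloc o) + w v c * g c := by
    intro v c
    rw [← mul_add]
    rcases eq_or_ne (w v c) 0 with h | h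
    · simp [h]
    refine mul_le_mul_of_nonneg_left ?_ (hw0 v c)
    by_cases hc : c = chat
    · subst hc
      simp only [hg_def, if_pos rfl]
      have h1 : dist (vloc v) (cloc a)
          ≤ dist (vloc v) (cloc o) + dist (cloc o) (cloc c) :=
        (halign v c h).trans (dist_triangle _ _ _)
      have h2 : dist (vloc v) (cloc a)
          ≤ dist (vloc v) (cloc o) + dist (cloc o) (cloc a) := dist_triangle _ _ _
      rw [hM_def, ← min_add_add_left]
      exact le_min h1 h2
    · simp only [hg_def, if_neg hc]
      exact (halign v c h).trans (dist_triangle _ _ _)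
  have hL : ∑ v, ∑ c, w v c * dist (vloc v) (cloc a) = S / n := by
    have h : ∀ v : V, ∑ c, w v c * dist (vloc v) (cloc a)
        = (1 / n) * dist (vloc v) (cloc a) := by
      intro v
      rw [← Finset.sum_mul, hrow v]
      simp [puni, hn_def]
    rw [Finset.sum_congr rfl fun v _ => h v, ← Finset.mul_sum, hS_def, SC]
    ring
  have hO : ∑ v, ∑ c, w v c * dist (vloc v) (cloc o) = So / n := by
    have h : ∀ v : V, ∑ c, w v c * dist (vloc v) (cloc o)
        = (1 / n) * dist (vloc v) (cloc o) := by
      intro v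
      rw [← Finset.sum_mul, hrow v]
      simp [puni, hn_def]
    rw [Finset.sum_congr rfl fun v _ => h v, ← Finset.mul_sum, hSo_def, SC]
    ring
  have hG : ∑ v, ∑ c, w v c * g c = ∑ c, qhat σ δ chat c * g c := by
    rw [Finset.sum_comm]
    exact Finset.sum_congr rfl fun c _ => by rw [← Finset.sum_mul, hcol c]
  have hmain : S / n ≤ So / n + ∑ c, qhat σ δ chat c * g c := by
    rw [← hL, ← hO, ← hG, ← Finset.sum_add_distrib]
    refine Finset.sum_le_sum fun v _ => ?_
    rw [← Finset.sum_add_distrib]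
    exact Finset.sum_le_sum fun c _ => hedge v c
  have hqchat : qhat σ δ chat chat = A * (plu σ chat : ℝ) / n + 2 * δ / (1 + δ) := by
    simp only [qhat, if_pos rfl, hA_def, ← hn_def, ↓reduceIte]
    field_simp
  have hterm : ∀ c : C, qhat σ δ chat c * g c
      ≤ A / n * ((plu σ c : ℝ) * dist (cloc o) (cloc c))
        + (if c = chat then 2 * δ / (1 + δ) * M else 0) := by
    intro c
    by_cases hc : c = chat
    · subst hc
      simp only [hg_def, if_pos rfl, if_true]
      rw [hqchat, add_mul]
      have h1 : A * (plu σ c : ℝ) / n * M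
          ≤ A / n * ((plu σ c : ℝ) * dist (cloc o) (cloc c)) := by
        calc A * (plu σ c : ℝ) / n * M ≤ A * (plu σ c : ℝ) / n * dist (cloc o) (cloc c) := by
              refine mul_le_mul_of_nonneg_left (min_le_left _ _) ?_
              positivity
          _ = A / n * ((plu σ c : ℝ) * dist (cloc o) (cloc c)) := by ring
      linarith
    · simp only [hg_def, qhat, if_neg hc, hA_def, ← hn_def]
      exact le_of_eq (by ring)
  have hqsum : ∑ c, qhat σ δ chat c * g c
      ≤ A / n * (∑ c, (plu σ c : ℝ) * dist (cloc o) (cloc c)) + 2 * δ / (1 + δ) * M := by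
    calc ∑ c, qhat σ δ chat c * g c
        ≤ ∑ c, (A / n * ((plu σ c : ℝ) * dist (cloc o) (cloc c))
            + (if c = chat then 2 * δ / (1 + δ) * M else 0)) :=
          Finset.sum_le_sum fun c _ => hterm c
      _ = _ := by
          rw [Finset.sum_add_distrib, ← Finset.mul_sum, Finset.sum_ite_eq' Finset.univ chat]
          simp
  have hP : ∑ c, (plu σ c : ℝ) * dist (cloc o) (cloc c) ≤ 2 * So := by
    rw [plu_mul_sum σ (fun c => dist (cloc o) (cloc c)), hSo_def, SC, Finset.mul_sum]
    refine Finset.sum_le_sum fun v _ => ?_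
    have h1 : dist (cloc o) (cloc (top σ v))
        ≤ dist (vloc v) (cloc o) + dist (vloc v) (cloc (top σ v)) :=
      dist_triangle_left _ _ _
    have h2 := top_min σ vloc cloc hal v o
    linarith
  have hmaster : (1 + δ) * S ≤ (3 - δ) * So + 2 * δ * (n * M) := by
    have h2 : S / n ≤ So / n + (A / n * (2 * So) + 2 * δ / (1 + δ) * M) := by
      refine hmain.trans ?_
      have := mul_le_mul_of_nonneg_left hP (by positivity : (0:ℝ) ≤ A / n)
      linarith [hqsum]
    rw [div_le_iff₀ hn] at h2
    rw [hA_def] at h2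
    have h3 : (So / n + ((1 - δ) / (1 + δ) / n * (2 * So) + 2 * δ / (1 + δ) * M)) * n
        = So + (1 - δ) / (1 + δ) * (2 * So) + 2 * δ / (1 + δ) * (n * M) := by
      field_simp
      ring
    rw [h3] at h2
    have h4 := mul_le_mul_of_nonneg_left h2 h1δ.le
    have h5 : (1 + δ) * (So + (1 - δ) / (1 + δ) * (2 * So) + 2 * δ / (1 + δ) * (n * M))
        = (3 - δ) * So + 2 * δ * (n * M) := by
      field_simp
      ring
    linarith [h4, h5.ge, h5.le]
  have hna : n * dist (cloc o) (cloc a) ≤ So + S := by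
    have h : ∑ _v : V, dist (cloc o) (cloc a) = n * dist (cloc o) (cloc a) := by
      rw [Finset.sum_const, nsmul_eq_mul, hn_def]
      simp
    rw [← h, hSo_def, hS_def, SC, SC, ← Finset.sum_add_distrib]
    exact Finset.sum_le_sum fun v _ => dist_triangle_left _ _ _
  have hbound2 : S ≤ (3 + δ) / (1 - δ) * So := by
    rw [div_mul_eq_mul_div, le_div_iff₀ h1δ']
    have hnM : n * M ≤ So + S := le_trans
      (mul_le_mul_of_nonneg_left (min_le_right _ _) hn.le) hna
    have hMa : 2 * δ * (n * M) ≤ 2 * δ * (So + S) :=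
      mul_le_mul_of_nonneg_left hnM (by positivity)
    nlinarith [hmaster, hMa]
  have hbound1 : S ≤ (3 - δ + 2 * δ * η) / (1 + δ) * So := by
    by_cases hSo : So = 0
    · rw [hSo, mul_zero]
      have h := hbound2
      rw [hSo, mul_zero] at h
      linarith
    · have hSop : 0 < So := lt_of_le_of_ne hSo0 (Ne.symm hSo)
      have hηS : 2 * δ * (n * dist (cloc o) (cloc chat)) = 2 * δ * η * So := by
        rw [hη, dist_comm (cloc chat) (cloc o)]
        field_simp
      rw [div_mul_eq_mul_div, le_div_iff₀ h1δ]
      have hMc : 2 * δ * (n * M) ≤ 2 * δ * (n * dist (cloc o) (cloc chat)) :=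
        mul_le_mul_of_nonneg_left
          (mul_le_mul_of_nonneg_left (min_le_left _ _) hn.le) (by positivity)
      have hexp : (3 - δ + 2 * δ * η) * So = (3 - δ) * So + 2 * δ * η * So := by ring
      rw [hexp]
      linarith [hmaster, hMc, hηS]
  rcases le_total ((3 - δ + 2 * δ * η) / (1 + δ)) ((3 + δ) / (1 - δ)) with h | h
  · rw [min_eq_left h]
    exact hbound1
  · rw [min_eq_right h]
    exact hbound2
end

section
/- Fix δ ∈ [0,1) and α ∈ [0,1]. Let (V,C,d) be an α-decisive instance inducing preference profile σ, let the prediction be correct (ĉ = o, a candidate minimizing SC(·,d)), and let q̂ ∈ Δ(C) be the BoostedSimVeto weight vector for δ and ĉ. Then any candidate a in the (p^uni, q̂)-veto core of σ satisfies SC(a,d) ≤ ((2+α−αδ)/(1+δ)) · SC(o,d). -/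
open Finset

/-- Proposition C.1 / `prop:consistencyalpha`: for `δ ∈ [0,1)`,
`α ∈ [0,1]`, an `α`-decisive instance, and an accurate prediction (`ĉ = o`), any
candidate in the `(p^uni, q̂)`-veto core (with `q̂` the BoostedSimVeto weight vector)
satisfies `SC(a,d) ≤ ((2+α−αδ)/(1+δ))·SC(o,d)`. -/
theorem boostedSimVeto_consistency_decisive {V C X : Type*}
    [Fintype V] [Nonempty V] [Fintype C] [Nonempty C] [DecidableEq C] [MetricSpace X]
    (σ : V → (C ≃ Fin (Fintype.card C)))
    (δ : ℝ) (hδ0 : 0 ≤ δ) (hδ1 : δ < 1)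
    (α : ℝ) (hα0 : 0 ≤ α) (hα1 : α ≤ 1)
    (vloc : V → X) (cloc : C → X) (hal : aligned vloc cloc σ)
    (hdec : ∀ (v : V) (c : C), c ≠ top σ v →
      dist (vloc v) (cloc (top σ v)) ≤ α * dist (vloc v) (cloc c))
    (chat : C)
    (a : C) (ha : inVetoCore σ (puni V) (qhat σ δ chat) a)
    (o : C) (ho : ∀ c, SC vloc cloc o ≤ SC vloc cloc c)
    (hacc : chat = o) :
    SC vloc cloc a ≤ ((2 + α - α * δ) / (1 + δ)) * SC vloc cloc o := by
  classical
  subst chat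
  obtain ⟨w, hw0, hwpref, hrow, hcol⟩ := ha
  have hn0 : 0 < Fintype.card V := Fintype.card_pos
  have hnpos : (0:ℝ) < (Fintype.card V : ℝ) := by exact_mod_cast hn0
  have hδ1' : (0:ℝ) < 1 - δ := by linarith
  have hδ2 : (0:ℝ) < 1 + δ := by linarith
  have hcoef : (0:ℝ) < (1 - δ) / (1 + δ) := div_pos hδ1' hδ2
  set n : ℝ := (Fintype.card V : ℝ) with hndef
  set S : C → Finset V := fun c => Finset.univ.filter fun v => top σ v = c with hS
  have hpluS : ∀ c, plu σ c = (S c).card := by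
    intro c
    simp [plu, Nat.card_eq_fintype_card, Fintype.card_subtype, hS]
  set D : V → ℝ := fun v => dist (vloc v) (cloc o) with hD
  have hD0 : ∀ v, 0 ≤ D v := fun v => dist_nonneg
  set g : C → ℝ := fun c =>
    if plu σ c = 0 then 0 else (∑ u ∈ S c, D u) / (plu σ c : ℝ) with hg
  set B : C → ℝ := fun c => if c = o then 0 else (1 + α) * g c with hBdef
  have hrank : ∀ v c, σ v a ≤ σ v c →
      dist (vloc v) (cloc a) ≤ dist (vloc v) (cloc c) := by
    intro v c h
    rcases lt_or_eq_of_le h with h | h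
    · exact hal v a c h
    · have hac : a = c := (σ v).injective h
      rw [hac]
  -- per-edge bound
  have hedge : ∀ v c, w v c ≠ 0 →
      dist (vloc v) (cloc a) ≤ D v + B c := by
    intro v c hwc
    by_cases hco : c = o
    · subst hco
      have := hrank v c (hwpref v c hwc)
      simp only [hBdef, if_pos rfl, add_zero]
      exact this
    · -- plu σ c > 0
      have hqpos : 0 < qhat σ δ o c := by
        have hwpos : 0 < w v c := (hw0 v c).lt_of_ne (Ne.symm hwc)
        have hle : w v c ≤ ∑ u, w u c :=
          Finset.single_le_sum (fun u _ => hw0 u c) (Finset.mem_univ v)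
        rw [hcol c] at hle
        linarith
      have hplupos : 0 < plu σ c := by
        by_contra hpc
        push_neg at hpc
        interval_cases h : plu σ c
        simp [qhat, hco, h] at hqpos
      have hplureal : (0:ℝ) < (plu σ c : ℝ) := by exact_mod_cast hplupos
      -- each voter whose top is c is close to o
      have hub : ∀ u ∈ S c, dist (cloc o) (cloc c) ≤ (1 + α) * D u := by
        intro u hu
        have htop : top σ u = c := by simpa [hS] using hu
        have hne : o ≠ top σ u := by rw [htop]; exact fun h => hco h.symm
        have h1 := hdec u o hne
        rw [htop] at h1
        have h2 : dist (cloc o) (cloc c) ≤ dist (cloc o) (vloc u) + dist (vloc u) (cloc c) :=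
          dist_triangle _ _ _
        have h3 : dist (cloc o) (vloc u) = D u := dist_comm _ _
        simp only [hD]
        linarith [h2, h3, h1]
      have hsum : (S c).card • dist (cloc o) (cloc c) ≤ ∑ u ∈ S c, (1 + α) * D u :=
        Finset.card_nsmul_le_sum _ _ _ hub
      rw [nsmul_eq_mul, ← Finset.mul_sum] at hsum
      have hcard : ((S c).card : ℝ) = (plu σ c : ℝ) := by rw [hpluS c]
      rw [hcard] at hsum
      have hgc : g c = (∑ u ∈ S c, D u) / (plu σ c : ℝ) := by
        simp [hg, Nat.pos_iff_ne_zero.mp hplupos]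
      have hoc : dist (cloc o) (cloc c) ≤ (1 + α) * g c := by
        rw [hgc, mul_div_assoc', le_div_iff₀ hplureal, mul_comm (dist _ _)]
        exact hsum
      have h4 : dist (vloc v) (cloc a) ≤ dist (vloc v) (cloc c) :=
        hrank v c (hwpref v c hwc)
      have h5 : dist (vloc v) (cloc c) ≤ D v + dist (cloc o) (cloc c) := by
        have := dist_triangle (vloc v) (cloc o) (cloc c)
        simpa [hD] using this
      have hB : B c = (1 + α) * g c := by simp [hBdef, hco]
      rw [hB]
      linarith
  -- the double sums
  have hA : ∑ v, ∑ c, w v c * dist (vloc v) (cloc a) = (1/n) * SC vloc cloc a := by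
    simp only [SC, Finset.mul_sum]
    refine Finset.sum_congr rfl fun v _ => ?_
    rw [← Finset.sum_mul, hrow v]
    simp [puni, hndef]
  have hO : ∑ v, ∑ c, w v c * D v = (1/n) * SC vloc cloc o := by
    simp only [SC, Finset.mul_sum]
    refine Finset.sum_congr rfl fun v _ => ?_
    rw [← Finset.sum_mul, hrow v]
    simp [puni, hndef, hD]
  have hstep : ∑ v, ∑ c, w v c * dist (vloc v) (cloc a) ≤
      ∑ v, ∑ c, w v c * (D v + B c) := by
    refine Finset.sum_le_sum fun v _ => Finset.sum_le_sum fun c _ => ?_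
    by_cases hwc : w v c = 0
    · simp [hwc]
    · exact mul_le_mul_of_nonneg_left (hedge v c hwc) (hw0 v c)
  have hsplit : ∑ v, ∑ c, w v c * (D v + B c) =
      (1/n) * SC vloc cloc o + ∑ c, qhat σ δ o c * B c := by
    have h1 : ∀ v, ∑ c, w v c * (D v + B c) =
        (∑ c, w v c * D v) + ∑ c, w v c * B c := by
      intro v
      rw [← Finset.sum_add_distrib]
      exact Finset.sum_congr rfl fun c _ => by ring
    simp_rw [h1]
    rw [Finset.sum_add_distrib, hO]
    congr 1
    rw [Finset.sum_comm]
    refine Finset.sum_congr rfl fun c _ => ?_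
    rw [← Finset.sum_mul, hcol c]
  -- bound the q̂·B term
  have hqB : ∑ c, qhat σ δ o c * B c ≤
      (1 + α) * ((1 - δ) / (1 + δ)) * (1/n) * SC vloc cloc o := by
    have hterm : ∀ c, qhat σ δ o c * B c ≤
        (1 + α) * ((1 - δ) / (1 + δ)) * (1/n) * ∑ u ∈ S c, D u := by
      intro c
      by_cases hco : c = o
      · subst hco
        have : B c = 0 := by simp [hBdef]
        rw [this, mul_zero]
        have h1 : (0:ℝ) ≤ ∑ u ∈ S c, D u := Finset.sum_nonneg fun u _ => hD0 u
        have h2 : (0:ℝ) ≤ (1 + α) * ((1 - δ) / (1 + δ)) * (1/n) := by positivity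
        exact mul_nonneg h2 h1
      · by_cases hpc : plu σ c = 0
        · have hScard : S c = ∅ := by
            have := hpluS c
            rw [hpc] at this
            exact Finset.card_eq_zero.mp this.symm
          simp [qhat, hco, hpc, hBdef, hg, hScard]
        · have hBc : B c = (1 + α) * ((∑ u ∈ S c, D u) / (plu σ c : ℝ)) := by
            simp [hBdef, hco, hg, hpc]
          have hqc : qhat σ δ o c = ((1 - δ) / (1 + δ)) * (plu σ c : ℝ) / n := by
            simp [qhat, hco, hndef]
          have hplune : ((plu σ c : ℝ)) ≠ 0 := by exact_mod_cast hpc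
          have hnne : n ≠ 0 := ne_of_gt hnpos
          rw [hBc, hqc]
          apply le_of_eq
          field_simp
    calc ∑ c, qhat σ δ o c * B c
        ≤ ∑ c, (1 + α) * ((1 - δ) / (1 + δ)) * (1/n) * ∑ u ∈ S c, D u :=
          Finset.sum_le_sum fun c _ => hterm c
      _ = (1 + α) * ((1 - δ) / (1 + δ)) * (1/n) * ∑ c, ∑ u ∈ S c, D u := by
          rw [Finset.mul_sum]
      _ = (1 + α) * ((1 - δ) / (1 + δ)) * (1/n) * SC vloc cloc o := by
          congr 1
          simp only [SC, hS]
          exact Finset.sum_fiberwise _ _ _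
  -- combine
  have hfinal : (1/n) * SC vloc cloc a ≤
      (1/n) * SC vloc cloc o + (1 + α) * ((1 - δ) / (1 + δ)) * (1/n) * SC vloc cloc o := by
    rw [← hA]
    calc ∑ v, ∑ c, w v c * dist (vloc v) (cloc a)
        ≤ ∑ v, ∑ c, w v c * (D v + B c) := hstep
      _ = (1/n) * SC vloc cloc o + ∑ c, qhat σ δ o c * B c := hsplit
      _ ≤ _ := by linarith [hqB]
  have hmul := mul_le_mul_of_nonneg_left hfinal (le_of_lt hnpos)
  have hne : n ≠ 0 := ne_of_gt hnpos
  have hcoeq : (1:ℝ) + (1 + α) * ((1 - δ) / (1 + δ)) = (2 + α - α * δ) / (1 + δ) := by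
    field_simp
    ring
  calc SC vloc cloc a = n * ((1/n) * SC vloc cloc a) := by field_simp
    _ ≤ n * ((1/n) * SC vloc cloc o + (1 + α) * ((1 - δ) / (1 + δ)) * (1/n) * SC vloc cloc o) :=
        hmul
    _ = (1 + (1 + α) * ((1 - δ) / (1 + δ))) * SC vloc cloc o := by field_simp
    _ = ((2 + α - α * δ) / (1 + δ)) * SC vloc cloc o := by rw [hcoeq]
end

section
/- Fix δ ∈ [0,1), α ∈ [0,1], and any predicted candidate ĉ ∈ C, and let q̂ ∈ Δ(C) be the BoostedSimVeto weight vector for δ and ĉ. Let (V,C,d) be an α-decisive instance inducing preference profile σ. Then any candidate a in the (p^uni, q̂)-veto core of σ satisfies SC(a,d) ≤ ( (2+α−αδ)/(1+δ) + 8δ/((1+δ)(1−δ)) ) · SC(o,d), where o is a candidate minimizing SC(·,d). -/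
open Finset

set_option maxHeartbeats 1000000 in
/-- Proposition C.2 / `prop:robustness_mainalpha`: for `δ ∈ [0,1)`,
`α ∈ [0,1]`, an `α`-decisive instance, and an arbitrary predicted candidate `ĉ`, any
candidate in the `(p^uni, q̂)`-veto core (with `q̂` the BoostedSimVeto weight vector)
satisfies `SC(a,d) ≤ ((2+α−αδ)/(1+δ) + 8δ/((1+δ)(1−δ)))·SC(o,d)`. -/
theorem boostedSimVeto_robustness_decisive {V C X : Type*}
    [Fintype V] [Nonempty V] [Fintype C] [Nonempty C] [DecidableEq C] [MetricSpace X]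
    (σ : V → (C ≃ Fin (Fintype.card C)))
    (δ : ℝ) (hδ0 : 0 ≤ δ) (hδ1 : δ < 1)
    (α : ℝ) (hα0 : 0 ≤ α) (hα1 : α ≤ 1)
    (vloc : V → X) (cloc : C → X) (hal : aligned vloc cloc σ)
    (hdec : ∀ (v : V) (c : C), c ≠ top σ v →
      dist (vloc v) (cloc (top σ v)) ≤ α * dist (vloc v) (cloc c))
    (chat : C)
    (a : C) (ha : inVetoCore σ (puni V) (qhat σ δ chat) a)
    (o : C) (ho : ∀ c, SC vloc cloc o ≤ SC vloc cloc c) :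
    SC vloc cloc a ≤
      ((2 + α - α * δ) / (1 + δ) + 8 * δ / ((1 + δ) * (1 - δ))) * SC vloc cloc o := by
  classical
  obtain ⟨w, hw0, hws, hwrow, hwcol⟩ := ha
  have hnpos : (0:ℝ) < (Fintype.card V : ℝ) := by exact_mod_cast Fintype.card_pos
  have hn0 : (Fintype.card V : ℝ) ≠ 0 := ne_of_gt hnpos
  have hf1 : (0:ℝ) < 1 - δ := by linarith
  have hf2 : (0:ℝ) < 1 + δ := by linarith
  set n : ℝ := (Fintype.card V : ℝ) with hn
  set κ : ℝ := (1 - δ) / (1 + δ) with hκ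
  have hκ0 : 0 ≤ κ := by positivity
  set D : V → C → ℝ := fun v c => dist (vloc v) (cloc c) with hD
  set dd : C → ℝ := fun c => dist (cloc o) (cloc c) with hdd
  set da : ℝ := dist (cloc o) (cloc a) with hda
  set A : C → ℝ := fun c => κ * (plu σ c : ℝ) / n with hA
  set B : C → ℝ := fun c => if c = chat then 2 * δ / (1 + δ) else 0 with hB
  have hA0 : ∀ c, 0 ≤ A c := fun c => by
    have : (0:ℝ) ≤ (plu σ c : ℝ) := Nat.cast_nonneg _
    simp only [hA]; positivity
  have hB0 : ∀ c, 0 ≤ B c := by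
    intro c; simp only [hB]; split <;> positivity
  have hqAB : ∀ c, qhat σ δ chat c = A c + B c := by
    intro c
    simp only [qhat, hA, hB, hκ, ← hn]
    rcases eq_or_ne c chat with rfl | h
    · simp only [↓reduceIte]
      field_simp
    · simp only [if_neg h, add_zero]
  -- edge inequality
  have hedge : ∀ v c, w v c * D v a ≤ w v c * D v c := by
    intro v c
    rcases eq_or_ne (w v c) 0 with h | h
    · simp [h]
    · refine mul_le_mul_of_nonneg_left ?_ (hw0 v c)
      rcases lt_or_eq_of_le (hws v c h) with hlt | heq
      · exact hal v a c hlt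
      · have : a = c := (σ v).injective heq
        simp [this, le_refl]
  -- column bounds
  have hcol1 : ∀ c, ∑ v, w v c * D v a ≤ (∑ v, w v c * D v o) + qhat σ δ chat c * dd c := by
    intro c
    have h1 : ∑ v, w v c * D v a ≤ ∑ v, w v c * (D v o + dd c) := by
      refine Finset.sum_le_sum fun v _ => le_trans (hedge v c) ?_
      refine mul_le_mul_of_nonneg_left ?_ (hw0 v c)
      exact dist_triangle (vloc v) (cloc o) (cloc c)
    refine le_trans h1 (le_of_eq ?_)
    rw [← hwcol c, Finset.sum_mul, ← Finset.sum_add_distrib]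
    exact Finset.sum_congr rfl fun v _ => by ring
  have hcol2 : ∀ c, ∑ v, w v c * D v a ≤ (∑ v, w v c * D v o) + qhat σ δ chat c * da := by
    intro c
    have h1 : ∑ v, w v c * D v a ≤ ∑ v, w v c * (D v o + da) := by
      refine Finset.sum_le_sum fun v _ => ?_
      refine mul_le_mul_of_nonneg_left ?_ (hw0 v c)
      exact dist_triangle (vloc v) (cloc o) (cloc a)
    refine le_trans h1 (le_of_eq ?_)
    rw [← hwcol c, Finset.sum_mul, ← Finset.sum_add_distrib]
    exact Finset.sum_congr rfl fun v _ => by ring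
  have hcol : ∀ c, ∑ v, w v c * D v a ≤ (∑ v, w v c * D v o) + (A c * dd c + B c * da) := by
    intro c
    have h1 := hcol1 c
    have h2 := hcol2 c
    rw [hqAB c] at h1 h2
    have hdd0 : 0 ≤ dd c := dist_nonneg
    have hda0 : 0 ≤ da := dist_nonneg
    rcases eq_or_lt_of_le (add_nonneg (hA0 c) (hB0 c)) with h0 | h0
    · have hA' : A c = 0 := by linarith [hA0 c, hB0 c]
      have hB' : B c = 0 := by linarith [hA0 c, hB0 c]
      rw [hA', hB'] at h1 ⊢
      simpa using h1
    · have key : (A c + B c) * (∑ v, w v c * D v a) ≤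
          (A c + B c) * ((∑ v, w v c * D v o) + (A c * dd c + B c * da)) := by
        nlinarith [mul_le_mul_of_nonneg_left h1 (hA0 c), mul_le_mul_of_nonneg_left h2 (hB0 c)]
      exact le_of_mul_le_mul_left key h0
  -- sum over columns
  have hsum : ∑ c, ∑ v, w v c * D v a ≤
      (∑ c, ∑ v, w v c * D v o) + ((∑ c, A c * dd c) + (∑ c, B c * da)) := by
    rw [← Finset.sum_add_distrib, ← Finset.sum_add_distrib]
    exact Finset.sum_le_sum fun c _ => hcol c
  -- row identities
  have hSCa : SC vloc cloc a = ∑ v, D v a := rfl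
  have hSCo : SC vloc cloc o = ∑ v, D v o := rfl
  have hRa : n * (∑ c, ∑ v, w v c * D v a) = SC vloc cloc a := by
    rw [Finset.sum_comm, hSCa, Finset.mul_sum]
    refine Finset.sum_congr rfl fun v _ => ?_
    rw [← Finset.sum_mul, hwrow v]
    have : puni V v = 1 / n := rfl
    rw [this]; field_simp
  have hRo : n * (∑ c, ∑ v, w v c * D v o) = SC vloc cloc o := by
    rw [Finset.sum_comm, hSCo, Finset.mul_sum]
    refine Finset.sum_congr rfl fun v _ => ?_
    rw [← Finset.sum_mul, hwrow v]
    have : puni V v = 1 / n := rfl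
    rw [this]; field_simp
  -- plurality bound
  have hplu_card : ∀ c : C, plu σ c = (Finset.univ.filter fun v => top σ v = c).card := by
    intro c
    rw [plu, Nat.card_eq_fintype_card]
    exact Fintype.card_subtype _
  have hpludd : ∀ c : C, (plu σ c : ℝ) * dd c ≤
      (1 + α) * ∑ v ∈ Finset.univ.filter (fun v => top σ v = c), D v o := by
    intro c
    rw [hplu_card c, Finset.mul_sum]
    have hconst : ((Finset.univ.filter fun v => top σ v = c).card : ℝ) * dd c =
        ∑ _v ∈ Finset.univ.filter (fun v => top σ v = c), dd c := by
      rw [Finset.sum_const, nsmul_eq_mul]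
    rw [hconst]
    refine Finset.sum_le_sum fun v hv => ?_
    have htop : top σ v = c := (Finset.mem_filter.mp hv).2
    have hDvo : 0 ≤ D v o := dist_nonneg
    rcases eq_or_ne c o with rfl | hne
    · have : dd c = 0 := dist_self _
      rw [this]; positivity
    · have h1 : dd c ≤ D v o + D v c := by
        simp only [hdd, hD]
        calc dist (cloc o) (cloc c) ≤ dist (cloc o) (vloc v) + dist (vloc v) (cloc c) :=
              dist_triangle _ _ _
          _ = dist (vloc v) (cloc o) + dist (vloc v) (cloc c) := by rw [dist_comm (cloc o)]
      have hne' : o ≠ top σ v := by rw [htop]; exact hne.symm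
      have h2 : D v c ≤ α * D v o := by
        have := hdec v o hne'
        rw [htop] at this
        exact this
      linarith
  have hAdd : ∑ c, A c * dd c ≤ κ * (1 + α) / n * SC vloc cloc o := by
    have step1 : ∑ c, A c * dd c = κ / n * ∑ c, (plu σ c : ℝ) * dd c := by
      rw [Finset.mul_sum]
      exact Finset.sum_congr rfl fun c _ => by simp only [hA]; ring
    have step2 : ∑ c, (plu σ c : ℝ) * dd c ≤
        (1 + α) * ∑ c, ∑ v ∈ Finset.univ.filter (fun v => top σ v = c), D v o := by
      rw [Finset.mul_sum]
      exact Finset.sum_le_sum fun c _ => hpludd c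
    have step3 : ∑ c : C, ∑ v ∈ Finset.univ.filter (fun v => top σ v = c), D v o =
        SC vloc cloc o := by
      rw [hSCo]; exact Finset.sum_fiberwise _ _ _
    calc ∑ c, A c * dd c = κ / n * ∑ c, (plu σ c : ℝ) * dd c := step1
      _ ≤ κ / n * ((1 + α) * ∑ c, ∑ v ∈ Finset.univ.filter (fun v => top σ v = c), D v o) :=
          mul_le_mul_of_nonneg_left step2 (by positivity)
      _ = κ * (1 + α) / n * SC vloc cloc o := by rw [step3]; ring
  have hBsum : ∑ c, B c * da = 2 * δ / (1 + δ) * da := by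
    simp only [hB, ite_mul, zero_mul]
    rw [Finset.sum_ite_eq' Finset.univ chat]
    simp
  have hnda : n * da ≤ SC vloc cloc o + SC vloc cloc a := by
    have h1 : ∀ v : V, da ≤ D v o + D v a := by
      intro v
      have t := dist_triangle (cloc o) (vloc v) (cloc a)
      rw [dist_comm (cloc o) (vloc v)] at t
      exact t
    have h2 : ∑ _v : V, da ≤ ∑ v : V, (D v o + D v a) :=
      Finset.sum_le_sum fun v _ => h1 v
    rw [Finset.sum_const, nsmul_eq_mul, Finset.card_univ] at h2
    rw [Finset.sum_add_distrib, ← hSCo, ← hSCa] at h2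
    exact h2
  -- assemble
  have hSCo0 : 0 ≤ SC vloc cloc o := by
    rw [hSCo]; exact Finset.sum_nonneg fun v _ => dist_nonneg
  have hSCa0 : 0 ≤ SC vloc cloc a := by
    rw [hSCa]; exact Finset.sum_nonneg fun v _ => dist_nonneg
  have htot : ∑ c, ∑ v, w v c * D v a ≤
      (∑ c, ∑ v, w v c * D v o) + (κ * (1 + α) / n * SC vloc cloc o + 2 * δ / (1 + δ) * da) := by
    have := hsum
    rw [hBsum] at this
    linarith [hAdd]
  have hmul := mul_le_mul_of_nonneg_left htot (le_of_lt hnpos)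
  rw [hRa] at hmul
  have hexp : n * ((∑ c, ∑ v, w v c * D v o) +
        (κ * (1 + α) / n * SC vloc cloc o + 2 * δ / (1 + δ) * da)) =
      SC vloc cloc o + κ * (1 + α) * SC vloc cloc o + 2 * δ / (1 + δ) * (n * da) := by
    rw [mul_add, hRo]
    field_simp
    ring
  rw [hexp] at hmul
  have h4 : SC vloc cloc a ≤ SC vloc cloc o + κ * (1 + α) * SC vloc cloc o +
      2 * δ / (1 + δ) * (SC vloc cloc o + SC vloc cloc a) := by
    have h3 : 2 * δ / (1 + δ) * (n * da) ≤ 2 * δ / (1 + δ) * (SC vloc cloc o + SC vloc cloc a) :=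
      mul_le_mul_of_nonneg_left hnda (by positivity)
    linarith
  have h4' : (1 + δ) * SC vloc cloc a ≤ (1 + δ) * SC vloc cloc o +
      (1 - δ) * (1 + α) * SC vloc cloc o + 2 * δ * (SC vloc cloc o + SC vloc cloc a) := by
    have e1 : (1 + δ) * (SC vloc cloc o + κ * (1 + α) * SC vloc cloc o +
        2 * δ / (1 + δ) * (SC vloc cloc o + SC vloc cloc a)) =
        (1 + δ) * SC vloc cloc o + (1 - δ) * (1 + α) * SC vloc cloc o +
        2 * δ * (SC vloc cloc o + SC vloc cloc a) := by
      rw [hκ]; field_simp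
    calc (1 + δ) * SC vloc cloc a ≤ (1 + δ) * (SC vloc cloc o + κ * (1 + α) * SC vloc cloc o +
          2 * δ / (1 + δ) * (SC vloc cloc o + SC vloc cloc a)) :=
        mul_le_mul_of_nonneg_left h4 hf2.le
      _ = _ := e1
  have keyineq : SC vloc cloc a * (1 - δ) ≤ (2 + α - α * δ + 2 * δ) * SC vloc cloc o := by
    nlinarith [h4']
  have hs' : SC vloc cloc a ≤ (2 + α - α * δ + 2 * δ) / (1 - δ) * SC vloc cloc o := by
    rw [div_mul_eq_mul_div, le_div_iff₀ hf1]
    linarith [keyineq]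
  refine hs'.trans ?_
  refine mul_le_mul_of_nonneg_right ?_ hSCo0
  have hcomb : (2 + α - α * δ) / (1 + δ) + 8 * δ / ((1 + δ) * (1 - δ)) =
      ((2 + α - α * δ) * (1 - δ) + 8 * δ) / ((1 + δ) * (1 - δ)) := by
    field_simp
  rw [hcomb, div_le_div_iff₀ hf1 (by positivity)]
  nlinarith [mul_nonneg (mul_nonneg (mul_nonneg hδ0 hf1.le) hf1.le) (sub_nonneg.2 hα1)]
end

section
/- Fix δ ∈ [0,1), α ∈ [0,1], and a predicted candidate ĉ ∈ C, and let q̂ ∈ Δ(C) be the BoostedSimVeto weight vector for δ and ĉ. Let (V,C,d) be an α-decisive instance inducing preference profile σ, and let the prediction error be η = n·d(ĉ,o)/SC(o,d), where o is a candidate minimizing SC(·,d). Then any candidate a in the (p^uni, q̂)-veto core of σ satisfies SC(a,d) ≤ ( (2+α−αδ)/(1+δ) + min{ 2δη/(1+δ), 8δ/((1+δ)(1−δ)) } ) · SC(o,d). -/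
open Finset

set_option maxHeartbeats 1000000 in
/-- Proposition 4.5 / `prop:error-devisiveness`: for `δ ∈ [0,1)`,
`α ∈ [0,1]`, an `α`-decisive instance, and a predicted candidate `ĉ` with prediction
error `η = n·d(ĉ,o)/SC(o,d)`, any candidate in the `(p^uni, q̂)`-veto core (with `q̂`
the BoostedSimVeto weight vector) satisfies
`SC(a,d) ≤ ((2+α−αδ)/(1+δ) + min{2δη/(1+δ), 8δ/((1+δ)(1−δ))})·SC(o,d)`. -/
theorem boostedSimVeto_error_bound_decisive {V C X : Type*}
    [Fintype V] [Nonempty V] [Fintype C] [Nonempty C] [DecidableEq C] [MetricSpace X]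
    (σ : V → (C ≃ Fin (Fintype.card C)))
    (δ : ℝ) (hδ0 : 0 ≤ δ) (hδ1 : δ < 1)
    (α : ℝ) (hα0 : 0 ≤ α) (hα1 : α ≤ 1)
    (vloc : V → X) (cloc : C → X) (hal : aligned vloc cloc σ)
    (hdec : ∀ (v : V) (c : C), c ≠ top σ v →
      dist (vloc v) (cloc (top σ v)) ≤ α * dist (vloc v) (cloc c))
    (chat : C)
    (a : C) (ha : inVetoCore σ (puni V) (qhat σ δ chat) a)
    (o : C) (ho : ∀ c, SC vloc cloc o ≤ SC vloc cloc c)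
    (η : ℝ) (hη : η = (Fintype.card V : ℝ) * dist (cloc chat) (cloc o) / SC vloc cloc o) :
    SC vloc cloc a ≤
      ((2 + α - α * δ) / (1 + δ) +
        min (2 * δ * η / (1 + δ)) (8 * δ / ((1 + δ) * (1 - δ)))) * SC vloc cloc o := by
  classical
  obtain ⟨w, hw0, hwe, hwr, hwc⟩ := ha
  have hNpos : (0:ℝ) < (Fintype.card V : ℝ) := by exact_mod_cast Fintype.card_pos
  have hNne : (Fintype.card V : ℝ) ≠ 0 := ne_of_gt hNpos
  have h1δ : (0:ℝ) < 1 + δ := by linarith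
  have h1δ' : (0:ℝ) < 1 - δ := by linarith
  have he0 : (0:ℝ) ≤ 2 * δ / (1 + δ) := by positivity
  have hk0 : (0:ℝ) ≤ (1 - δ) / (1 + δ) := div_nonneg h1δ'.le h1δ.le
  have hS0 : 0 ≤ SC vloc cloc o := Finset.sum_nonneg fun _ _ => dist_nonneg
  have hSa0 : 0 ≤ SC vloc cloc a := Finset.sum_nonneg fun _ _ => dist_nonneg
  have hedge : ∀ v c, w v c ≠ 0 → dist (vloc v) (cloc a) ≤ dist (vloc v) (cloc c) := by
    intro v c h
    rcases lt_or_eq_of_le (hwe v c h) with hlt | heq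
    · exact hal v a c hlt
    · rw [(σ v).injective heq]
  have hrow : ∀ v, ∑ c, w v c = 1 / (Fintype.card V : ℝ) := fun v => hwr v
  have hplusum : ∀ f : C → ℝ, ∑ c, (plu σ c : ℝ) * f c = ∑ v, f (top σ v) := by
    intro f
    rw [← Finset.sum_fiberwise Finset.univ (fun v => top σ v) fun v => f (top σ v)]
    refine Finset.sum_congr rfl fun c _ => ?_
    have hcard : (plu σ c : ℝ) = ((Finset.univ.filter fun v => top σ v = c).card : ℝ) := by
      norm_cast
      rw [plu, Nat.card_eq_fintype_card, Fintype.card_subtype]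
    have hcon : ∑ v ∈ Finset.univ.filter (fun v => top σ v = c), f (top σ v)
        = ∑ _v ∈ Finset.univ.filter (fun v => top σ v = c), f c :=
      Finset.sum_congr rfl fun v hv => by rw [(Finset.mem_filter.mp hv).2]
    rw [hcon, Finset.sum_const, nsmul_eq_mul, hcard]
  have hpluD : ∑ c, (plu σ c : ℝ) * dist (cloc o) (cloc c) ≤ (1+α) * SC vloc cloc o := by
    rw [hplusum fun c => dist (cloc o) (cloc c)]
    have hpt : ∀ v, dist (cloc o) (cloc (top σ v)) ≤ (1+α) * dist (vloc v) (cloc o) := by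
      intro v
      by_cases h : top σ v = o
      · rw [h, dist_self]
        exact mul_nonneg (by linarith) dist_nonneg
      · have hd := hdec v o fun he => h he.symm
        have ht := dist_triangle (cloc o) (vloc v) (cloc (top σ v))
        rw [dist_comm (cloc o) (vloc v)] at ht
        linarith
    calc ∑ v, dist (cloc o) (cloc (top σ v))
        ≤ ∑ v, (1+α) * dist (vloc v) (cloc o) := Finset.sum_le_sum fun v _ => hpt v
      _ = (1+α) * SC vloc cloc o := by rw [SC, Finset.mul_sum]
  have hq : ∀ c, qhat σ δ chat c
      = (1-δ)/(1+δ) * (plu σ c : ℝ) / (Fintype.card V : ℝ)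
        + (if c = chat then 2*δ/(1+δ) else 0) := by
    intro c
    simp only [qhat]
    by_cases h : c = chat
    · rw [if_pos h, if_pos h, h]
      field_simp
    · rw [if_neg h, if_neg h, add_zero]
  have master : ∀ u : ℝ,
      (∀ v, w v chat ≠ 0 → dist (vloc v) (cloc a) ≤ dist (vloc v) (cloc o) + u) →
      SC vloc cloc a ≤ SC vloc cloc o + (1-δ)/(1+δ) * ((1+α) * SC vloc cloc o)
        + (Fintype.card V : ℝ) * (2*δ/(1+δ)) * u := by
    intro u Hu
    set G : C → ℝ := fun c => if c = chat
      then min (dist (cloc o) (cloc chat)) u else dist (cloc o) (cloc c) with hG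
    have hGle : ∀ c, G c ≤ dist (cloc o) (cloc c) := by
      intro c
      by_cases h : c = chat
      · simp only [hG, if_pos h, h]
        exact min_le_left _ _
      · simp only [hG, if_neg h]
        exact le_rfl
    have hGchat : G chat ≤ u := by
      simp only [hG, if_pos rfl]
      exact min_le_right _ _
    have hpoint : ∀ v c, w v c * dist (vloc v) (cloc a)
        ≤ w v c * (dist (vloc v) (cloc o) + G c) := by
      intro v c
      by_cases h : w v c = 0
      · simp [h]
      · refine mul_le_mul_of_nonneg_left ?_ (hw0 v c)
        have h1 : dist (vloc v) (cloc a) ≤ dist (vloc v) (cloc o) + dist (cloc o) (cloc c) :=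
          (hedge v c h).trans (dist_triangle _ _ _)
        by_cases hc : c = chat
        · have h2 := Hu v (hc ▸ h)
          rw [hc] at h1
          simp only [hG, if_pos hc]
          rcases min_cases (dist (cloc o) (cloc chat)) u with ⟨hm, _⟩ | ⟨hm, _⟩ <;>
            rw [hm] <;> linarith
        · simp only [hG, if_neg hc]
          exact h1
    have e1 : SC vloc cloc a
        = (Fintype.card V : ℝ) * ∑ v, ∑ c, w v c * dist (vloc v) (cloc a) := by
      rw [SC, Finset.mul_sum]
      refine Finset.sum_congr rfl fun v _ => ?_
      rw [← Finset.sum_mul, hrow v]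
      field_simp
    have e2 : ∑ v, ∑ c, w v c * dist (vloc v) (cloc a)
        ≤ ∑ v, ∑ c, w v c * (dist (vloc v) (cloc o) + G c) :=
      Finset.sum_le_sum fun v _ => Finset.sum_le_sum fun c _ => hpoint v c
    have e3 : ∑ v, ∑ c, w v c * (dist (vloc v) (cloc o) + G c)
        = 1/(Fintype.card V : ℝ) * SC vloc cloc o + ∑ c, qhat σ δ chat c * G c := by
      simp_rw [mul_add, Finset.sum_add_distrib]
      congr 1
      · rw [SC, Finset.mul_sum]
        refine Finset.sum_congr rfl fun v _ => ?_
        rw [← Finset.sum_mul, hrow v]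
      · rw [Finset.sum_comm]
        refine Finset.sum_congr rfl fun c _ => ?_
        rw [← Finset.sum_mul, hwc c]
    have e4 : ∑ c, qhat σ δ chat c * G c
        ≤ (1-δ)/(1+δ)/(Fintype.card V : ℝ) * ((1+α) * SC vloc cloc o) + 2*δ/(1+δ) * u := by
      have step1 : ∑ c, qhat σ δ chat c * G c
          ≤ ∑ c, ((1-δ)/(1+δ)/(Fintype.card V : ℝ)
              * ((plu σ c : ℝ) * dist (cloc o) (cloc c))
            + (if c = chat then 2*δ/(1+δ)*u else 0)) := by
        refine Finset.sum_le_sum fun c _ => ?_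
        rw [hq c, add_mul]
        refine add_le_add ?_ ?_
        · have hco : (0:ℝ) ≤ (1-δ)/(1+δ) * (plu σ c : ℝ)/(Fintype.card V : ℝ) :=
            div_nonneg (mul_nonneg hk0 (Nat.cast_nonneg _)) hNpos.le
          calc (1-δ)/(1+δ) * (plu σ c : ℝ)/(Fintype.card V:ℝ) * G c
              ≤ (1-δ)/(1+δ) * (plu σ c : ℝ)/(Fintype.card V:ℝ) * dist (cloc o) (cloc c) :=
                mul_le_mul_of_nonneg_left (hGle c) hco
            _ = (1-δ)/(1+δ)/(Fintype.card V:ℝ) * ((plu σ c:ℝ) * dist (cloc o) (cloc c)) := by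
                ring
        · by_cases hc : c = chat
          · rw [if_pos hc, if_pos hc, hc]
            exact mul_le_mul_of_nonneg_left hGchat he0
          · rw [if_neg hc, if_neg hc, zero_mul]
      have step2 : ∑ c, ((1-δ)/(1+δ)/(Fintype.card V : ℝ)
              * ((plu σ c : ℝ) * dist (cloc o) (cloc c))
            + (if c = chat then 2*δ/(1+δ)*u else 0))
          = (1-δ)/(1+δ)/(Fintype.card V:ℝ)
              * (∑ c, (plu σ c : ℝ) * dist (cloc o) (cloc c)) + 2*δ/(1+δ)*u := by
        rw [Finset.sum_add_distrib, ← Finset.mul_sum]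
        congr 1
        simp [Finset.sum_ite_eq']
      have hco2 : (0:ℝ) ≤ (1-δ)/(1+δ)/(Fintype.card V:ℝ) := div_nonneg hk0 hNpos.le
      have step3 := mul_le_mul_of_nonneg_left hpluD hco2
      calc ∑ c, qhat σ δ chat c * G c ≤ _ := step1
        _ = _ := step2
        _ ≤ (1-δ)/(1+δ)/(Fintype.card V : ℝ) * ((1+α) * SC vloc cloc o) + 2*δ/(1+δ) * u := by
            linarith
    have e5 : ∑ v, ∑ c, w v c * dist (vloc v) (cloc a)
        ≤ 1/(Fintype.card V:ℝ) * SC vloc cloc o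
          + ((1-δ)/(1+δ)/(Fintype.card V:ℝ) * ((1+α)*SC vloc cloc o) + 2*δ/(1+δ)*u) := by
      refine e2.trans ?_
      rw [e3]
      linarith [e4]
    rw [e1]
    have e6 := mul_le_mul_of_nonneg_left e5 hNpos.le
    have e7 : (Fintype.card V:ℝ) * (1/(Fintype.card V:ℝ) * SC vloc cloc o
          + ((1-δ)/(1+δ)/(Fintype.card V:ℝ) * ((1+α)*SC vloc cloc o) + 2*δ/(1+δ)*u))
        = SC vloc cloc o + (1-δ)/(1+δ)*((1+α)*SC vloc cloc o)
          + (Fintype.card V:ℝ)*(2*δ/(1+δ))*u := by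
      field_simp
      ring
    linarith [e6, e7.le, e7.ge]
  have h1 := master (dist (cloc o) (cloc chat))
    fun v h => (hedge v chat h).trans (dist_triangle _ _ _)
  have h2 := master (dist (cloc o) (cloc a)) fun v _ => dist_triangle _ _ _
  have hna : (Fintype.card V:ℝ) * dist (cloc o) (cloc a)
      ≤ SC vloc cloc o + SC vloc cloc a := by
    have hsum : ∑ _v : V, dist (cloc o) (cloc a)
        ≤ ∑ v, (dist (vloc v) (cloc o) + dist (vloc v) (cloc a)) := by
      refine Finset.sum_le_sum fun v _ => ?_
      have ht := dist_triangle (cloc o) (vloc v) (cloc a)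
      rw [dist_comm (cloc o) (vloc v)] at ht
      exact ht
    rw [Finset.sum_const, Finset.card_univ, nsmul_eq_mul, Finset.sum_add_distrib] at hsum
    simp only [SC]
    linarith [hsum]
  have h2' : SC vloc cloc a ≤ SC vloc cloc o + (1-δ)/(1+δ)*((1+α)*SC vloc cloc o)
      + 2*δ/(1+δ)*(SC vloc cloc o + SC vloc cloc a) := by
    have hx := mul_le_mul_of_nonneg_left hna he0
    nlinarith [h2]
  rcases min_cases (2*δ*η/(1+δ)) (8*δ/((1+δ)*(1-δ))) with ⟨hm, _⟩ | ⟨hm, _⟩ <;> rw [hm]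
  · by_cases hS : SC vloc cloc o = 0
    · rw [hS, mul_zero]
      rw [hS] at h2'
      have h1me : (0:ℝ) < 1 - 2*δ/(1+δ) := by
        rw [sub_pos, div_lt_one h1δ]
        linarith
      have hle : SC vloc cloc a * (1 - 2*δ/(1+δ)) ≤ 0 * (1 - 2*δ/(1+δ)) := by
        rw [zero_mul]
        nlinarith [h2']
      exact le_of_mul_le_mul_right hle h1me
    · have hηS : η * SC vloc cloc o = (Fintype.card V:ℝ) * dist (cloc o) (cloc chat) := by
        rw [hη, div_mul_cancel₀ _ hS, dist_comm (cloc chat) (cloc o)]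
      have expand : ((2 + α - α * δ) / (1 + δ) + 2 * δ * η / (1 + δ)) * SC vloc cloc o
          = SC vloc cloc o + (1-δ)/(1+δ)*((1+α)*SC vloc cloc o)
            + 2*δ/(1+δ)*(η*SC vloc cloc o) := by
        field_simp
        ring
      rw [expand, hηS]
      nlinarith [h1]
  · have h3 : (1-δ) * SC vloc cloc a ≤ (2+α+2*δ-α*δ) * SC vloc cloc o := by
      have h2c := mul_le_mul_of_nonneg_left h2' h1δ.le
      have hexp : (1+δ)*(SC vloc cloc o + (1-δ)/(1+δ)*((1+α)*SC vloc cloc o)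
            + 2*δ/(1+δ)*(SC vloc cloc o + SC vloc cloc a))
          = (1+δ)*SC vloc cloc o + (1-δ)*((1+α)*SC vloc cloc o)
            + 2*δ*(SC vloc cloc o + SC vloc cloc a) := by
        field_simp
      rw [hexp] at h2c
      nlinarith [h2c]
    have hpos : (0:ℝ) < (1+δ)*(1-δ) := mul_pos h1δ h1δ'
    have expand2 : ((2 + α - α * δ) / (1 + δ) + 8 * δ / ((1 + δ) * (1 - δ))) * SC vloc cloc o
        = ((2+α+6*δ-2*α*δ+α*δ^2) * SC vloc cloc o) / ((1+δ)*(1-δ)) := by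
      field_simp
      ring
    rw [expand2, le_div_iff₀ hpos]
    nlinarith [mul_le_mul_of_nonneg_left h3 h1δ.le,
      mul_nonneg (mul_nonneg hδ0 (by linarith : (0:ℝ) ≤ 1 - α)) (mul_nonneg h1δ'.le hS0)]
end
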